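/- arXiv:1810.04018 — 7 statements merged into one kernel-verified Lean document; each statement's English description precedes it below -/
import Mathlib

section
/- Let G be a subgroup of the symmetric group S_d that contains a d-cycle, a transposition, and a (d-1)-cycle. Then G = S_d. -/
/-!
The `d`-cycle makes `G` transitive on `Fin d`, and the `(d-1)`-cycle makes the stabilizer of its
fixed point transitive on the remaining points; hence `G` is `2`-transitive. A `2`-transitive group
is primitive, and by Jordan's theorem a primitive permutation group containing a transposition is
the full symmetric group.
-/

open Equiv.Perm MulAction

theorem Finset.exists_eq_compl_singleton_of_card_eq {α : Type*} [Fintype α] [DecidableEq α]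
    [Nonempty α] {s : Finset α} (hs : s.card = Fintype.card α - 1) : ∃ a, s = {a}ᶜ := by
  have : sᶜ.card = 1 := by
    rw [Finset.card_compl, hs]
    have := Fintype.card_pos (α := α)
    omega
  obtain ⟨a, ha⟩ := Finset.card_eq_one.mp this
  exact ⟨a, by rw [← ha, compl_compl]⟩

namespace Equiv.Perm

variable {α : Type*} [Fintype α] [DecidableEq α] {G : Subgroup (Perm α)} {g : Perm α}

theorem isPretransitive_of_isCycle_mem_of_support_eq_univ (hgG : g ∈ G) (hg : g.IsCycle)
    (hsupp : g.support = Finset.univ) : IsPretransitive G α where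
  exists_smul_eq x y := by
    have hmoved (z : α) : g z ≠ z := mem_support.mp (hsupp ▸ Finset.mem_univ z)
    obtain ⟨n, hn⟩ := hg.exists_pow_eq (hmoved x) (hmoved y)
    exact ⟨⟨g ^ n, pow_mem hgG n⟩, hn⟩

theorem isPretransitive_stabilizer_of_isCycle_mem_of_support_eq_compl {a : α} (hgG : g ∈ G)
    (hg : g.IsCycle) (hsupp : g.support = {a}ᶜ) :
    IsPretransitive (stabilizer G a) (SubMulAction.ofStabilizer G a) where
  exists_smul_eq x y := by
    have hmoved (z : SubMulAction.ofStabilizer G a) : g z ≠ z := by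
      rw [← mem_support, hsupp, Finset.mem_compl, Finset.mem_singleton]
      exact (SubMulAction.mem_ofStabilizer_iff G a).mp z.2
    have hga : g a = a := notMem_support.mp (by simp [hsupp])
    obtain ⟨n, hn⟩ := hg.exists_pow_eq (hmoved x) (hmoved y)
    exact ⟨⟨⟨g ^ n, pow_mem hgG n⟩, pow_apply_eq_self_of_apply_eq_self hga n⟩,
      Subtype.ext hn⟩

end Equiv.Perm

/-- Let `G` be a subgroup of the symmetric group `S_d` that contains a `d`-cycle,
a transposition, and a `(d-1)`-cycle. Then `G = S_d`. -/
theorem subgroup_eq_top_of_cycles_and_swap (d : ℕ) (G : Subgroup (Equiv.Perm (Fin d)))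
    (σ τ ρ : Equiv.Perm (Fin d))
    (hσG : σ ∈ G) (hσ : σ.IsCycle) (hσd : σ.support.card = d)
    (hτG : τ ∈ G) (hτ : τ.IsSwap)
    (hρG : ρ ∈ G) (hρ : ρ.IsCycle) (hρd : ρ.support.card = d - 1) :
    G = ⊤ := by
  have : NeZero d := ⟨by have := hσ.two_le_card_support; omega⟩
  have := isPretransitive_of_isCycle_mem_of_support_eq_univ hσG hσ
    (Finset.eq_univ_of_card _ (by simpa using hσd))
  obtain ⟨a, ha⟩ := Finset.exists_eq_compl_singleton_of_card_eq
    (s := ρ.support) (by simpa using hρd)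
  have := isPretransitive_stabilizer_of_isCycle_mem_of_support_eq_compl hρG hρ ha
  have h2 : IsMultiplyPretransitive G (Fin d) 2 :=
    (SubMulAction.ofStabilizer.isMultiplyPretransitive (a := a)).mpr
      (is_one_pretransitive_iff.mpr inferInstance)
  exact subgroup_eq_top_of_isPreprimitive_of_isSwap_mem
    (isPreprimitive_of_is_two_pretransitive h2) τ hτ hτG
end

section
/- Let d ≥ 5 be odd, and let G be a subgroup of S_d containing a d-cycle, a transposition, and a (d-2)-cycle. Then G = S_d. -/
open Equiv Equiv.Perm Finset

/-- Let `d ≥ 5` be odd, and let `G` be a subgroup of `S_d` containing a `d`-cycle,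
a transposition, and a `(d-2)`-cycle. Then `G = S_d`. -/
theorem subgroup_eq_top_of_cycles_and_swap_odd (d : ℕ) (hd : 5 ≤ d) (hodd : Odd d)
    (G : Subgroup (Equiv.Perm (Fin d)))
    (σ τ ρ : Equiv.Perm (Fin d))
    (hσG : σ ∈ G) (hσ : σ.IsCycle) (hσd : σ.support.card = d)
    (hτG : τ ∈ G) (hτ : τ.IsSwap)
    (hρG : ρ ∈ G) (hρ : ρ.IsCycle) (hρd : ρ.support.card = d - 2) :
    G = ⊤ := by
  classical
  -- the "connectedness" relation: `R x y` iff the swap of `x` and `y` lies in `G`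
  set R : Fin d → Fin d → Prop := fun x y => x = y ∨ Equiv.swap x y ∈ G with hRdef
  have hrefl : ∀ x, R x x := fun x => Or.inl rfl
  have hsymm : ∀ {x y}, R x y → R y x := by
    rintro x y (rfl | h)
    · exact Or.inl rfl
    · exact Or.inr (by rwa [Equiv.swap_comm])
  have hconj : ∀ {g : Equiv.Perm (Fin d)}, g ∈ G → ∀ {x y}, R x y → R (g x) (g y) := by
    rintro g hg x y (rfl | h)
    · exact Or.inl rfl
    · refine Or.inr ?_
      rw [Equiv.swap_apply_apply]
      exact G.mul_mem (G.mul_mem hg h) (G.inv_mem hg)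
  have htrans : ∀ {x y z}, R x y → R y z → R x z := by
    rintro x y z (rfl | h1) h2
    · exact h2
    rcases h2 with rfl | h2
    · exact Or.inr h1
    by_cases hxz : x = z
    · exact Or.inl hxz
    by_cases hxy : x = y
    · subst hxy; exact Or.inr h2
    by_cases hyz : y = z
    · subst hyz; exact Or.inr h1
    -- conjugate `swap x y` by `swap y z`
    have key := hconj (g := Equiv.swap y z) h2 (Or.inr h1 : R x y)
    rwa [Equiv.swap_apply_of_ne_of_ne hxy hxz, Equiv.swap_apply_left] at key
  -- the "class" of a point
  set C : Fin d → Finset (Fin d) := fun x => Finset.univ.filter (fun y => R x y) with hCdef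
  have hmemC : ∀ {x y}, y ∈ C x ↔ R x y := by
    intro x y; simp [hCdef]
  -- transitivity of G on Fin d
  have hσsupp : σ.support = Finset.univ := Finset.eq_univ_of_card _ (by simpa using hσd)
  have hGtrans : ∀ x y : Fin d, ∃ g ∈ G, g x = y := by
    intro x y
    have hx : σ x ≠ x := by
      rw [← Equiv.Perm.mem_support, hσsupp]; exact Finset.mem_univ x
    have hy : σ y ≠ y := by
      rw [← Equiv.Perm.mem_support, hσsupp]; exact Finset.mem_univ y
    obtain ⟨i, hi⟩ := hσ.exists_zpow_eq hx hy
    exact ⟨σ ^ i, G.zpow_mem hσG i, hi⟩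
  -- all classes have the same cardinality
  have himg : ∀ {g : Equiv.Perm (Fin d)}, g ∈ G → ∀ x, (C x).image g = C (g x) := by
    intro g hg x
    ext z
    simp only [Finset.mem_image]
    constructor
    · rintro ⟨w, hw, rfl⟩
      exact hmemC.mpr (hconj hg (hmemC.mp hw))
    · intro hz
      refine ⟨g⁻¹ z, hmemC.mpr ?_, by simp⟩
      have := hconj (G.inv_mem hg) (hmemC.mp hz)
      simpa using this
  have hcard : ∀ x y : Fin d, (C x).card = (C y).card := by
    intro x y
    obtain ⟨g, hg, rfl⟩ := hGtrans x y
    rw [← himg hg x, Finset.card_image_of_injective _ g.injective]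
  -- the two fixed points of ρ
  have hcompl : ρ.supportᶜ.card = 2 := by
    rw [Finset.card_compl, hρd]
    simp only [Fintype.card_fin]
    omega
  obtain ⟨u, v, huv, hset⟩ := Finset.card_eq_two.mp hcompl
  have hfixu : ρ u = u := by
    have : u ∈ ρ.supportᶜ := by rw [hset]; simp
    rw [Finset.mem_compl, Equiv.Perm.notMem_support] at this; exact this
  have hfixv : ρ v = v := by
    have : v ∈ ρ.supportᶜ := by rw [hset]; simp
    rw [Finset.mem_compl, Equiv.Perm.notMem_support] at this; exact this
  have hmemsupp : ∀ z : Fin d, z ≠ u → z ≠ v → z ∈ ρ.support := by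
    intro z hzu hzv
    by_contra hz
    have : z ∈ ρ.supportᶜ := Finset.mem_compl.mpr hz
    rw [hset] at this
    simp only [Finset.mem_insert, Finset.mem_singleton] at this
    tauto
  -- reach lemma for a fixed point p of ρ
  have hreach : ∀ p : Fin d, ρ p = p → (∃ w ∈ ρ.support, R p w) → ∀ z ∈ ρ.support, R p z := by
    intro p hp ⟨w, hw, hpw⟩ z hz
    obtain ⟨i, hi⟩ := hρ.exists_zpow_eq (Equiv.Perm.mem_support.mp hw) (Equiv.Perm.mem_support.mp hz)
    have key := hconj (G.zpow_mem hρG i) hpw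
    have hpfix : (ρ ^ i) p = p := Equiv.Perm.zpow_apply_eq_self_of_apply_eq_self hp i
    rwa [hpfix, hi] at key
  -- support is nonempty
  obtain ⟨z₀, hz₀⟩ : ∃ z, z ∈ ρ.support := by
    have : 0 < ρ.support.card := by omega
    exact Finset.card_pos.mp this
  -- final step from totality of R
  have finish : (∀ x y : Fin d, R x y) → G = ⊤ := by
    intro hall
    rw [eq_top_iff, ← Equiv.Perm.closure_isSwap, Subgroup.closure_le]
    rintro f ⟨x, y, hxy, rfl⟩
    rcases hall x y with h | h
    · exact absurd h hxy
    · exact h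
  -- the parity argument: if all classes have size 2, contradiction with d odd
  have parity : (∀ x : Fin d, (C x).card = 2) → False := by
    intro h2
    have hself : ∀ x : Fin d, x ∈ C x := fun x => hmemC.mpr (hrefl x)
    have herase : ∀ x : Fin d, ∃ y, (C x).erase x = {y} := by
      intro x
      apply Finset.card_eq_one.mp
      rw [Finset.card_erase_of_mem (hself x), h2]
    choose f hf using herase
    have hfx : ∀ x, f x ∈ (C x).erase x := fun x => by rw [hf]; simp
    have hfne : ∀ x, f x ≠ x := fun x => Finset.ne_of_mem_erase (hfx x)
    have hfR : ∀ x, R x (f x) := fun x => hmemC.mp (Finset.mem_of_mem_erase (hfx x))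
    have hinv : ∀ x, f (f x) = x := by
      intro x
      have : x ∈ (C (f x)).erase (f x) :=
        Finset.mem_erase.mpr ⟨(hfne x).symm, hmemC.mpr (hsymm (hfR x))⟩
      rw [hf (f x)] at this
      exact (Finset.mem_singleton.mp this).symm
    -- d = 2 * |A| where A = {x | x < f x}
    set A := Finset.univ.filter (fun x : Fin d => x < f x) with hA
    set B := Finset.univ.filter (fun x : Fin d => f x < x) with hB
    have hAB : A.card = B.card := by
      apply Finset.card_bij' (fun x _ => f x) (fun y _ => f y)
      · intro a ha
        simp only [hA, hB, Finset.mem_filter, Finset.mem_univ, true_and] at *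
        rw [hinv]; exact ha
      · intro a ha
        simp only [hA, hB, Finset.mem_filter, Finset.mem_univ, true_and] at *
        rw [hinv]; exact ha
      · intro a _; exact hinv a
      · intro a _; exact hinv a
    have hdisj : Disjoint A B := by
      rw [Finset.disjoint_filter]
      intro x _ hx
      exact lt_asymm hx
    have hunion : A ∪ B = Finset.univ := Finset.eq_univ_of_forall fun x => by
      simp only [hA, hB, Finset.mem_union, Finset.mem_filter, Finset.mem_univ, true_and]
      exact lt_or_gt_of_ne (hfne x).symm
    have : d = A.card + B.card := by
      rw [← Finset.card_union_of_disjoint hdisj, hunion]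
      simp
    rw [← hAB] at this
    have : Even d := ⟨A.card, this⟩
    exact Nat.not_even_iff_odd.mpr hodd this
  -- τ gives a class of size ≥ 2
  obtain ⟨a, b, hab, rfl⟩ := hτ
  have hRab : R a b := Or.inr hτG
  have hcard2 : 2 ≤ (C a).card := by
    have : ({a, b} : Finset (Fin d)) ⊆ C a := by
      intro x hx
      simp only [Finset.mem_insert, Finset.mem_singleton] at hx
      rcases hx with rfl | rfl
      · exact hmemC.mpr (hrefl x)
      · exact hmemC.mpr hRab
    calc 2 = ({a, b} : Finset (Fin d)).card := (Finset.card_pair hab).symm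
    _ ≤ (C a).card := Finset.card_le_card this
  -- main case analysis
  by_cases hAu : ∃ w ∈ ρ.support, R u w
  · by_cases hBv : ∃ w ∈ ρ.support, R v w
    · -- both fixed points connect to the support: R is total
      have hRuz : ∀ z ∈ ρ.support, R u z := hreach u hfixu hAu
      have hRvz : ∀ z ∈ ρ.support, R v z := hreach v hfixv hBv
      have hRuv : R u v := htrans (hRuz z₀ hz₀) (hsymm (hRvz z₀ hz₀))
      have hallu : ∀ z, R u z := by
        intro z
        by_cases hzu : z = u
        · subst hzu; exact hrefl z
        by_cases hzv : z = v
        · subst hzv; exact hRuv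
        · exact hRuz z (hmemsupp z hzu hzv)
      exact finish fun x y => htrans (hsymm (hallu x)) (hallu y)
    · -- C v is tiny but C u is huge: contradiction with equal class sizes
      exfalso
      push_neg at hBv
      have hCv : C v ⊆ {u, v} := by
        intro y hy
        have hRvy := hmemC.mp hy
        by_contra hmem
        simp only [Finset.mem_insert, Finset.mem_singleton] at hmem
        push_neg at hmem
        exact hBv y (hmemsupp y hmem.1 hmem.2) hRvy
      have h1 : (C v).card ≤ 2 := le_trans (Finset.card_le_card hCv) (by
        simpa using Finset.card_insert_le u ({v} : Finset (Fin d)))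
      have hRuz : ∀ z ∈ ρ.support, R u z := hreach u hfixu hAu
      have hCu : ρ.support ∪ {u} ⊆ C u := by
        intro z hz
        rcases Finset.mem_union.mp hz with hz | hz
        · exact hmemC.mpr (hRuz z hz)
        · rw [Finset.mem_singleton] at hz; subst hz; exact hmemC.mpr (hrefl z)
      have husupp : u ∉ ρ.support := by
        rw [Equiv.Perm.notMem_support]; exact hfixu
      have h2 : d - 1 ≤ (C u).card := by
        have := Finset.card_le_card hCu
        rw [Finset.card_union_of_disjoint (by simpa using husupp), hρd,
          Finset.card_singleton] at this
        omega
      have := hcard u v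
      omega
  · by_cases hBv : ∃ w ∈ ρ.support, R v w
    · -- symmetric: C u tiny, C v huge
      exfalso
      push_neg at hAu
      have hCu : C u ⊆ {u, v} := by
        intro y hy
        have hRuy := hmemC.mp hy
        by_contra hmem
        simp only [Finset.mem_insert, Finset.mem_singleton] at hmem
        push_neg at hmem
        exact hAu y (hmemsupp y hmem.1 hmem.2) hRuy
      have h1 : (C u).card ≤ 2 := le_trans (Finset.card_le_card hCu) (by
        simpa using Finset.card_insert_le u ({v} : Finset (Fin d)))
      have hRvz : ∀ z ∈ ρ.support, R v z := hreach v hfixv hBv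
      have hCv : ρ.support ∪ {v} ⊆ C v := by
        intro z hz
        rcases Finset.mem_union.mp hz with hz | hz
        · exact hmemC.mpr (hRvz z hz)
        · rw [Finset.mem_singleton] at hz; subst hz; exact hmemC.mpr (hrefl z)
      have hvsupp : v ∉ ρ.support := by
        rw [Equiv.Perm.notMem_support]; exact hfixv
      have h2 : d - 1 ≤ (C v).card := by
        have := Finset.card_le_card hCv
        rw [Finset.card_union_of_disjoint (by simpa using hvsupp), hρd,
          Finset.card_singleton] at this
        omega
      have := hcard u v
      omega
    · -- both classes tiny: all classes have size exactly 2, contradiction with parity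
      exfalso
      push_neg at hAu
      have hCu : C u ⊆ {u, v} := by
        intro y hy
        have hRuy := hmemC.mp hy
        by_contra hmem
        simp only [Finset.mem_insert, Finset.mem_singleton] at hmem
        push_neg at hmem
        exact hAu y (hmemsupp y hmem.1 hmem.2) hRuy
      have h1 : (C u).card ≤ 2 := le_trans (Finset.card_le_card hCu) (by
        simpa using Finset.card_insert_le u ({v} : Finset (Fin d)))
      have hsize : ∀ x : Fin d, (C x).card = 2 := by
        intro x
        have e1 := hcard x a
        have e2 := hcard x u
        omega
      exact parity hsize
end

section
/- For d ≥ 5 odd, the discriminant of the polynomial x^{d-3}(x+1)^3 − t^2 in the variable x equals (−1)^{(d−1)/2} t^{2d−4} (d^d t^2 − 27 (d−3)^{d−3}). -/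
/-!
For monic `f` of degree `n`, `polyDisc f` is `± ∏ f'(r)` over the roots. For
`f = X^m (X+1)^k - s` the derivative factors as `X^(m-1) (X+1)^(k-1) (n X + m)` with `n = m + k`,
and a product `∏ (b r + c)` over the roots of a monic split `f` equals `(-b)^n f(-c/b)`. So only
the values of `f` at `0`, `-1` and the critical point `-m/n` are needed, and there
`f(0) = f(-1) = -s`.
-/

open Polynomial

noncomputable def polyDisc {K : Type*} [Field K] (f : K[X]) : K :=
  (-1) ^ (f.natDegree * (f.natDegree - 1) / 2) * f.leadingCoeff ^ (f.natDegree - 2) *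
    (f.roots.map fun r => (derivative f).eval r).prod

namespace Polynomial

variable {K : Type*} [Field K]

theorem Splits.prod_roots_map_mul_add {f : K[X]} (hsplit : f.Splits) (hf : f.Monic) {b : K}
    (hb : b ≠ 0) (c : K) :
    (f.roots.map fun r => b * r + c).prod = (-b) ^ f.natDegree * f.eval (-(c / b)) := by
  rw [hsplit.eval_eq_prod_roots_of_monic hf, ← splits_iff_card_roots.mp hsplit,
    ← Multiset.prod_replicate, ← Multiset.map_const', ← Multiset.prod_map_mul]
  refine congrArg _ (Multiset.map_congr rfl fun r _ => ?_)
  field_simp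
  ring

variable (m k : ℕ) (s : K)

theorem natDegree_X_pow_mul_X_add_one_pow_sub_C :
    ((X : K[X]) ^ m * (X + C 1) ^ k - C s).natDegree = m + k := by
  rw [natDegree_sub_C, (monic_X_pow m).natDegree_mul ((monic_X_add_C 1).pow k), natDegree_pow,
    natDegree_pow, natDegree_X, natDegree_X_add_C, mul_one, mul_one]

theorem monic_X_pow_mul_X_add_one_pow_sub_C (hmk : m + k ≠ 0) :
    ((X : K[X]) ^ m * (X + C 1) ^ k - C s).Monic := by
  have hg : ((X : K[X]) ^ m * (X + C 1) ^ k).Monic :=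
    (monic_X_pow m).mul ((monic_X_add_C 1).pow k)
  refine hg.sub_of_left (degree_C_le.trans_lt ?_)
  rw [degree_eq_natDegree hg.ne_zero, natDegree_sub_C.symm.trans
    (natDegree_X_pow_mul_X_add_one_pow_sub_C m k s)]
  exact_mod_cast Nat.pos_of_ne_zero hmk

theorem derivative_X_pow_mul_X_add_one_pow_sub_C (hm : m ≠ 0) (hk : k ≠ 0) :
    derivative ((X : K[X]) ^ m * (X + C 1) ^ k - C s) =
      X ^ (m - 1) * (X + C 1) ^ (k - 1) * (C ((m + k : ℕ) : K) * X + C (m : K)) := by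
  obtain ⟨m, rfl⟩ := Nat.exists_eq_add_one_of_ne_zero hm
  obtain ⟨k, rfl⟩ := Nat.exists_eq_add_one_of_ne_zero hk
  simp only [derivative_sub, derivative_C, sub_zero, derivative_mul, derivative_pow,
    derivative_X, derivative_one, add_zero, mul_one, Nat.add_sub_cancel, map_natCast,
    Nat.cast_add, Nat.cast_one, map_add, map_one]
  ring

end Polynomial

theorem polyDisc_of_monic {K : Type*} [Field K] {f : K[X]} (hf : f.Monic) :
    polyDisc f = (-1) ^ (f.natDegree * (f.natDegree - 1) / 2) *
      (f.roots.map fun r => (derivative f).eval r).prod := by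
  rw [polyDisc, hf.leadingCoeff, one_pow, mul_one]

theorem polyDisc_X_pow_mul_X_add_one_pow_sub_C {K : Type*} [Field K] [IsAlgClosed K]
    [CharZero K] {m k : ℕ} (hm : m ≠ 0) (hk : k ≠ 0) (s : K) :
    polyDisc ((X : K[X]) ^ m * (X + C 1) ^ k - C s) =
      (-1) ^ ((m + k) * (m + k - 1) / 2) * s ^ (m + k - 2) *
        ((m : K) ^ m * (-(k : K)) ^ k - (-((m + k : ℕ) : K)) ^ (m + k) * s) := by
  set f : K[X] := X ^ m * (X + C 1) ^ k - C s
  set n := m + k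
  have hmonic : f.Monic := monic_X_pow_mul_X_add_one_pow_sub_C m k s (by omega)
  have hdeg : f.natDegree = n := natDegree_X_pow_mul_X_add_one_pow_sub_C m k s
  have hsplit : f.Splits := IsAlgClosed.splits f
  have hnK : (n : K) ≠ 0 := Nat.cast_ne_zero.mpr (by omega)
  have hprod_roots : (f.roots.map fun r => r).prod = (-1) ^ (n + 1) * s := by
    have h := hsplit.prod_roots_map_mul_add hmonic one_ne_zero 0
    rw [hdeg] at h
    simpa [f, zero_pow hm, pow_succ] using h
  have hprod_roots_add_one : (f.roots.map fun r => r + 1).prod = (-1) ^ (n + 1) * s := by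
    have h := hsplit.prod_roots_map_mul_add hmonic one_ne_zero 1
    rw [hdeg] at h
    simpa [f, zero_pow hk, pow_succ] using h
  have hprod_crit : (f.roots.map fun r => (n : K) * r + m).prod =
      (m : K) ^ m * (-(k : K)) ^ k - (-(n : K)) ^ n * s := by
    have hcrit : -((m : K) / n) + 1 = k / n := by
      field_simp
      push_cast [n]
      ring
    rw [hsplit.prod_roots_map_mul_add hmonic hnK, hdeg]
    simp only [f, eval_sub, eval_mul, eval_pow, eval_add, eval_X, eval_C, hcrit]
    rw [mul_sub, show (-(n : K)) ^ n = (-(n : K)) ^ m * (-(n : K)) ^ k from pow_add _ _ _,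
      mul_mul_mul_comm, ← mul_pow, ← mul_pow, neg_mul_neg, mul_div_cancel₀ _ hnK,
      neg_mul, mul_div_cancel₀ _ hnK]
  have hsign : ((-1 : K) ^ (n + 1)) ^ (n - 2) = 1 := by
    obtain ⟨j, hj⟩ : ∃ j, n = j + 2 := ⟨n - 2, by omega⟩
    rw [hj, Nat.add_sub_cancel, ← pow_mul, show (j + 2 + 1) * j = j * (j + 1) + 2 * j by ring,
      pow_add, (Nat.even_mul_succ_self j).neg_one_pow, pow_mul, neg_one_sq, one_pow, one_mul]
  rw [polyDisc_of_monic hmonic, hdeg, derivative_X_pow_mul_X_add_one_pow_sub_C m k s hm hk]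
  simp only [eval_mul, eval_pow, eval_add, eval_X, eval_C]
  rw [Multiset.prod_map_mul, Multiset.prod_map_mul, Multiset.prod_map_pow,
    Multiset.prod_map_pow, hprod_roots, hprod_roots_add_one, hprod_crit, ← pow_add,
    show m - 1 + (k - 1) = n - 2 by omega, mul_pow, hsign, one_mul, mul_assoc]

theorem Odd.neg_one_pow_mul_sub_one_div_two {R : Type*} [Monoid R] [HasDistribNeg R] {d : ℕ}
    (hd : Odd d) : (-1 : R) ^ (d * (d - 1) / 2) = (-1) ^ ((d - 1) / 2) := by
  rw [Nat.mul_div_assoc d (Nat.Odd.sub_odd hd odd_one).two_dvd, pow_mul, hd.neg_one_pow]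

/-- For `d ≥ 5` odd, the discriminant of `x^(d-3) (x+1)^3 - t^2` in `x` equals
`(-1)^((d-1)/2) t^(2d-4) (d^d t^2 - 27 (d-3)^(d-3))`. -/
theorem disc_pow_mul_cube_sub_sq {K : Type*} [Field K] [IsAlgClosed K] [CharZero K]
    (d : ℕ) (hd : 5 ≤ d) (hodd : Odd d) (t : K) :
    polyDisc ((X : K[X]) ^ (d - 3) * (X + C 1) ^ 3 - C (t ^ 2)) =
      (-1 : K) ^ ((d - 1) / 2) * t ^ (2 * d - 4) *
        ((d : K) ^ d * t ^ 2 - 27 * ((d : K) - 3) ^ (d - 3)) := by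
  have h3 : 3 ≤ d := by omega
  rw [polyDisc_X_pow_mul_X_add_one_pow_sub_C (by omega) three_ne_zero, Nat.sub_add_cancel h3,
    hodd.neg_one_pow_mul_sub_one_div_two, hodd.neg_pow, Nat.cast_sub h3, ← pow_mul,
    show 2 * (d - 2) = 2 * d - 4 by omega]
  push_cast
  ring
end

section
/- Let d ≥ 4 be even, let f be a monic cubic over ℚ, let t ∈ ℚ be nonzero, and suppose P(x) = t^2 x^d − f(x) is irreducible over ℚ. Then for any root α of P in an algebraic closure, the point (α, t·α^{d/2}) lies on the curve y^2 = f(x), and its coordinates generate the degree-d field ℚ(α). -/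
open Polynomial IntermediateField

theorem Polynomial.natDegree_C_mul_X_pow_sub {R : Type*} [Ring R] {a : R} (ha : a ≠ 0) {n : ℕ}
    {g : R[X]} (hg : g.natDegree < n) : (C a * X ^ n - g).natDegree = n := by
  have hlead : (C a * X ^ n).natDegree = n := natDegree_C_mul_X_pow n a ha
  rw [natDegree_sub_eq_left_of_natDegree_lt (hlead.symm ▸ hg), hlead]

theorem IntermediateField.finrank_adjoin_simple_eq_natDegree_of_irreducible {K L : Type*}
    [Field K] [Field L] [Algebra K L] {p : K[X]} (hp : Irreducible p) {x : L}
    (hx : aeval x p = 0) : Module.finrank K K⟮x⟯ = p.natDegree := by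
  have hint : IsIntegral K x := (show IsAlgebraic K x from ⟨p, hp.ne_zero, hx⟩).isIntegral
  rw [adjoin.finrank hint, minpoly.Irreducible.eq_minpoly hp hx,
    natDegree_C_mul (leadingCoeff_ne_zero.mpr hp.ne_zero)]

theorem mul_pow_half_sq {M : Type*} [CommMonoid M] (c a : M) {d : ℕ} (hd : Even d) :
    (c * a ^ (d / 2)) ^ 2 = c ^ 2 * a ^ d := by
  rw [mul_pow, ← pow_mul, Nat.div_mul_cancel hd.two_dvd]

theorem point_on_curve_even_degree_twist_general (d : ℕ) (hd : 4 ≤ d) (heven : Even d)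
    (f : ℚ[X]) (hdeg : f.natDegree = 3)
    (t : ℚ) (ht : t ≠ 0) (hirr : Irreducible (C (t ^ 2) * X ^ d - f))
    (α : AlgebraicClosure ℚ) (hα : aeval α (C (t ^ 2) * X ^ d - f) = 0) :
    (algebraMap ℚ (AlgebraicClosure ℚ) t * α ^ (d / 2)) ^ 2 = aeval α f ∧
      Module.finrank ℚ (ℚ⟮α⟯ : IntermediateField ℚ (AlgebraicClosure ℚ)) = d := by
  refine ⟨?_, ?_⟩
  · rw [mul_pow_half_sq _ _ heven, ← sub_eq_zero, ← hα]
    simp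
  · rw [finrank_adjoin_simple_eq_natDegree_of_irreducible hirr hα,
      natDegree_C_mul_X_pow_sub (pow_ne_zero 2 ht) (by omega)]

/-- Let `d ≥ 4` be even, let `f` be a monic cubic over `ℚ` with nonzero discriminant,
let `t ∈ ℚ` be nonzero, and suppose `P(x) = t² x^d - f(x)` is irreducible over `ℚ`.
Then for any root `α` of `P` in an algebraic closure, the point `(α, t α^(d/2))` lies on
the curve `y² = f(x)`, and its coordinates generate the degree-`d` field `ℚ(α)`. -/
theorem point_on_curve_even_degree_twist (d : ℕ) (hd : 4 ≤ d) (heven : Even d)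
    (f : ℚ[X]) (hmonic : f.Monic) (hdeg : f.natDegree = 3)
    (hdisc : polyDisc (f.map (algebraMap ℚ ℂ)) ≠ 0)
    (t : ℚ) (ht : t ≠ 0) (hirr : Irreducible (C (t ^ 2) * X ^ d - f))
    (α : AlgebraicClosure ℚ) (hα : aeval α (C (t ^ 2) * X ^ d - f) = 0) :
    (algebraMap ℚ (AlgebraicClosure ℚ) t * α ^ (d / 2)) ^ 2 = aeval α f ∧
      Module.finrank ℚ (ℚ⟮α⟯ : IntermediateField ℚ (AlgebraicClosure ℚ)) = d :=
  point_on_curve_even_degree_twist_general d hd heven f hdeg t ht hirr α hα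
end

section
/- Let h(t) be a polynomial over ℚ that is not squarefull (some irreducible factor appears with multiplicity exactly one). Then there exist infinitely many primes p and integers t_0 such that p exactly divides h(t_0) (p | h(t_0) but p^2 ∤ h(t_0)). -/
/-!
Write `h = q * g` with `q` irreducible and `q ∤ g`, and clear denominators to get integer
polynomials `Q ∼ q`, `G ∼ g`. Since `q` is coprime to `g` and (being separable) to `q'`, Bézout
identities over `ℤ` show that only finitely many primes divide `Q(t)` together with `G(t)` or
`Q'(t)`. By Schur's theorem infinitely many primes divide some value `Q(t)`; for all but
finitely many of them `p ∤ Q'(t)`, so `p² ∤ Q(t)` or `p² ∤ Q(t + p)`, and then `p` exactly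
divides the corresponding value of `h`.
-/

open Polynomial

lemma Int.finite_setOf_natCast_dvd {r : ℤ} (hr : r ≠ 0) : {p : ℕ | (p : ℤ) ∣ r}.Finite :=
  r.natAbs.divisors.finite_toSet.subset fun _ hp =>
    Nat.mem_divisors.2 ⟨Int.natCast_dvd.1 hp, Int.natAbs_ne_zero.2 hr⟩

lemma padicValInt_eq_one {p : ℕ} [Fact p.Prime] {a : ℤ} (h₁ : (p : ℤ) ∣ a)
    (h₂ : ¬(p : ℤ) ^ 2 ∣ a) : padicValInt p a = 1 := by
  have ha : a ≠ 0 := by rintro rfl; exact h₂ (dvd_zero _)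
  have hle := ((padicValInt_dvd_iff 1 a).1 (by simpa using h₁)).resolve_left ha
  have hlt : ¬2 ≤ padicValInt p a := fun h => h₂ ((padicValInt_dvd_iff 2 a).2 (Or.inr h))
  omega

lemma padicValInt_mul_eq_one {p : ℕ} [Fact p.Prime] {a b : ℤ} (h₁ : (p : ℤ) ∣ a)
    (h₂ : ¬(p : ℤ) ^ 2 ∣ a) (hb : ¬(p : ℤ) ∣ b) : padicValInt p (a * b) = 1 := by
  have ha : a ≠ 0 := by rintro rfl; exact h₂ (dvd_zero _)
  have hb₀ : b ≠ 0 := by rintro rfl; exact hb (dvd_zero _)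
  rw [padicValInt.mul ha hb₀, padicValInt_eq_one h₁ h₂, padicValInt.eq_zero_of_not_dvd hb]

namespace Polynomial

lemma exists_map_eq_C_mul (f : ℚ[X]) :
    ∃ (F : ℤ[X]) (m : ℤ), m ≠ 0 ∧ F.map (Int.castRingHom ℚ) = C (m : ℚ) * f := by
  obtain ⟨b, hb, hbf⟩ := IsLocalization.integerNormalization_spec (nonZeroDivisors ℤ) f
  refine ⟨IsLocalization.integerNormalization (nonZeroDivisors ℤ) f, b,
    nonZeroDivisors.ne_zero hb, ?_⟩
  rw [← algebraMap_int_eq, hbf, ← Int.cast_smul_eq_zsmul ℚ, smul_eq_C_mul]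

lemma eval_intCast_of_map_eq_C_mul {f : ℚ[X]} {F : ℤ[X]} {m : ℤ}
    (hF : F.map (Int.castRingHom ℚ) = C (m : ℚ) * f) (t : ℤ) :
    ((F.eval t : ℤ) : ℚ) = m * f.eval (t : ℚ) := by
  simpa [hF] using (eval_intCast_map (Int.castRingHom ℚ) F t).symm

lemma natDegree_eq_of_map_eq_C_mul {f : ℚ[X]} {F : ℤ[X]} {m : ℤ}
    (hF : F.map (Int.castRingHom ℚ) = C (m : ℚ) * f) (hm : m ≠ 0) :
    F.natDegree = f.natDegree := by
  rw [← natDegree_map_eq_of_injective (Int.castRingHom ℚ).injective_int, hF,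
    natDegree_C_mul (by exact_mod_cast hm)]

lemma isCoprime_map_of_map_eq_C_mul {f g : ℚ[X]} {F G : ℤ[X]} {m n : ℤ}
    (hF : F.map (Int.castRingHom ℚ) = C (m : ℚ) * f)
    (hG : G.map (Int.castRingHom ℚ) = C (n : ℚ) * g) (hm : m ≠ 0) (hn : n ≠ 0)
    (hfg : IsCoprime f g) :
    IsCoprime (F.map (Int.castRingHom ℚ)) (G.map (Int.castRingHom ℚ)) := by
  rwa [hF, hG, isCoprime_mul_units_left (isUnit_C.2 (by simpa using hm))
    (isUnit_C.2 (by simpa using hn))]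

lemma padicValRat_eval_of_map_eq_C_mul {p : ℕ} [Fact p.Prime] {f : ℚ[X]} {F : ℤ[X]} {m : ℤ}
    (hF : F.map (Int.castRingHom ℚ) = C (m : ℚ) * f) (hm : ¬(p : ℤ) ∣ m) (t : ℤ) :
    padicValRat p (f.eval (t : ℚ)) = padicValInt p (F.eval t) := by
  have hm₀ : (m : ℚ) ≠ 0 := by exact_mod_cast fun h : m = 0 => hm (h ▸ dvd_zero _)
  have hft : f.eval (t : ℚ) = ((F.eval t : ℤ) : ℚ) / m := by
    rw [eval_intCast_of_map_eq_C_mul hF t]; field_simp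
  obtain hFt | hFt := eq_or_ne (F.eval t) 0
  · simp [hft, hFt]
  rw [hft, padicValRat.div (by exact_mod_cast hFt) hm₀, padicValRat.of_int, padicValRat.of_int,
    padicValInt.eq_zero_of_not_dvd hm, Nat.cast_zero, sub_zero]

lemma exists_mul_add_mul_eq_C_of_isCoprime_map {F G : ℤ[X]}
    (h : IsCoprime (F.map (Int.castRingHom ℚ)) (G.map (Int.castRingHom ℚ))) :
    ∃ r : ℤ, r ≠ 0 ∧ ∃ A B : ℤ[X], A * F + B * G = C r := by
  obtain ⟨a, b, hab⟩ := h
  obtain ⟨A, d₁, hd₁, hA⟩ := exists_map_eq_C_mul a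
  obtain ⟨B, d₂, hd₂, hB⟩ := exists_map_eq_C_mul b
  refine ⟨d₁ * d₂, mul_ne_zero hd₁ hd₂, C d₂ * A, C d₁ * B,
    map_injective _ (Int.castRingHom ℚ).injective_int ?_⟩
  simp only [Polynomial.map_add, Polynomial.map_mul, Polynomial.map_C, hA, hB,
    Int.coe_castRingHom, C_mul]
  linear_combination (C (d₁ : ℚ) * C (d₂ : ℚ)) * hab

lemma finite_setOf_natCast_dvd_eval_of_isCoprime_map {F G : ℤ[X]}
    (h : IsCoprime (F.map (Int.castRingHom ℚ)) (G.map (Int.castRingHom ℚ))) :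
    {p : ℕ | ∃ t : ℤ, (p : ℤ) ∣ F.eval t ∧ (p : ℤ) ∣ G.eval t}.Finite := by
  obtain ⟨r, hr, A, B, hAB⟩ := exists_mul_add_mul_eq_C_of_isCoprime_map h
  refine (Int.finite_setOf_natCast_dvd hr).subset fun p ⟨t, hF, hG⟩ => ?_
  have hr : A.eval t * F.eval t + B.eval t * G.eval t = r := by simpa using congrArg (eval t) hAB
  exact hr ▸ dvd_add (hF.mul_left _) (hG.mul_left _)

lemma exists_dvd_eval_not_sq_dvd {R : Type*} [CommRing R] [IsDomain R] (F : R[X]) {p t : R}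
    (hp : p ≠ 0) (ht : p ∣ F.eval t) (ht' : ¬p ∣ F.derivative.eval t) :
    ∃ s, p ∣ F.eval s ∧ ¬p ^ 2 ∣ F.eval s := by
  by_cases hsq : p ^ 2 ∣ F.eval t
  · obtain ⟨k, hk⟩ := F.binomExpansion t p
    refine ⟨t + p, ?_, fun hsq' => ht' ?_⟩
    · rw [hk]
      exact dvd_add (dvd_add ht (dvd_mul_left _ _)) ((dvd_pow_self p two_ne_zero).mul_left k)
    · have : p * p ∣ F.derivative.eval t * p := by
        rw [← sq, show F.derivative.eval t * p = F.eval (t + p) - F.eval t - k * p ^ 2 by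
          rw [hk]; ring]
        exact (hsq'.sub hsq).sub (dvd_mul_left _ _)
      exact (mul_dvd_mul_iff_right hp).1 this
  · exact ⟨t, ht, hsq⟩

lemma exists_prime_not_dvd_dvd_eval {Q : ℤ[X]} (hQ : 0 < Q.natDegree) {M : ℤ} (hM : M ≠ 0) :
    ∃ p : ℕ, p.Prime ∧ ¬(p : ℤ) ∣ M ∧ ∃ t : ℤ, (p : ℤ) ∣ Q.eval t := by
  obtain hc | hc := eq_or_ne (Q.eval 0) 0
  · obtain ⟨p, hMp, hp⟩ := Nat.exists_infinite_primes (M.natAbs + 1)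
    refine ⟨p, hp, fun hpM => ?_, 0, by simp [hc]⟩
    have := Nat.le_of_dvd (Int.natAbs_pos.2 hM) (Int.natCast_dvd.1 hpM)
    omega
  set c := Q.eval 0
  -- `Q(cMk) = c (1 + M k R(cMk))`; the second factor is prime to `M`, and not a unit for all
  -- but finitely many `k`.
  have hfin : ((Q.eval ∘ (c * M * ·)) ⁻¹' {c, -c}).Finite := by
    have := Q.tendstoCofinite_of_natDegree_ne_zero hQ.ne'
    have := Filter.tendstoCofinite_of_injective (mul_right_injective₀ (mul_ne_zero hc hM))
    exact Filter.TendstoCofinite.finite_preimage _ (Set.toFinite _)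
  obtain ⟨k, hk⟩ := hfin.infinite_compl.nonempty
  obtain ⟨R, hR⟩ : X ∣ Q - C c := by simp [X_dvd_iff, c, coeff_zero_eq_eval_zero]
  set u := 1 + M * (k * R.eval (c * M * k))
  have hQu : Q.eval (c * M * k) = c * u := by
    have := congrArg (eval (c * M * k)) hR
    simp only [eval_sub, eval_C, eval_mul, eval_X] at this
    linear_combination this
  have hu : u.natAbs ≠ 1 := fun h => hk <| by
    rcases Int.natAbs_eq_iff.1 h with h | h <;> simp [hQu, h]
  obtain ⟨p, hp, hpu⟩ := Nat.exists_prime_and_dvd hu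
  have hpu : (p : ℤ) ∣ u := Int.natCast_dvd.2 hpu
  refine ⟨p, hp, fun hpM => hp.one_lt.ne' ?_, c * M * k, hQu ▸ hpu.mul_left c⟩
  have : (p : ℤ) ∣ 1 := (dvd_add_left (hpM.mul_right _)).1 hpu
  exact_mod_cast Int.eq_one_of_dvd_one (by positivity) this

lemma infinite_setOf_prime_dvd_eval {Q : ℤ[X]} (hQ : 0 < Q.natDegree) :
    {p : ℕ | p.Prime ∧ ∃ t : ℤ, (p : ℤ) ∣ Q.eval t}.Infinite :=
  Set.infinite_of_forall_exists_gt fun N => by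
    obtain ⟨p, hp, hpN, t, ht⟩ :=
      exists_prime_not_dvd_dvd_eval hQ (M := N.factorial) (by positivity)
    exact ⟨p, ⟨hp, t, ht⟩, not_le.1 fun h => hpN (by exact_mod_cast hp.dvd_factorial.2 h)⟩

end Polynomial

theorem infinitely_many_exact_prime_divisors_general (h : ℚ[X])
    (hnsf : ∃ q : ℚ[X], Irreducible q ∧ q ∣ h ∧ ¬ q ^ 2 ∣ h) :
    {p : ℕ | p.Prime ∧ ∃ t₀ : ℤ, padicValRat p (h.eval (t₀ : ℚ)) = 1}.Infinite := by
  obtain ⟨q, hq, ⟨g, rfl⟩, hq2⟩ := hnsf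
  have hqg : IsCoprime q g :=
    hq.coprime_iff_not_dvd.2 fun hd => hq2 (by rw [sq]; exact mul_dvd_mul_left q hd)
  obtain ⟨Q, m, hm, hQ⟩ := exists_map_eq_C_mul q
  obtain ⟨G, n, hn, hG⟩ := exists_map_eq_C_mul g
  have hQ' : Q.derivative.map (Int.castRingHom ℚ) = C (m : ℚ) * q.derivative := by
    rw [← derivative_map, hQ, derivative_C_mul]
  have hQG : (Q * G).map (Int.castRingHom ℚ) = C ((m * n : ℤ) : ℚ) * (q * g) := by
    rw [Polynomial.map_mul, hQ, hG, Int.cast_mul, C_mul]; ring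
  have hbad := ((finite_setOf_natCast_dvd_eval_of_isCoprime_map
      (isCoprime_map_of_map_eq_C_mul hQ hG hm hn hqg)).union
    (finite_setOf_natCast_dvd_eval_of_isCoprime_map
      (isCoprime_map_of_map_eq_C_mul hQ hQ' hm hm hq.separable))).union
    (Int.finite_setOf_natCast_dvd (mul_ne_zero hm hn))
  have hQdeg : 0 < Q.natDegree := natDegree_eq_of_map_eq_C_mul hQ hm ▸ hq.natDegree_pos
  refine ((infinite_setOf_prime_dvd_eval hQdeg).sdiff hbad).mono ?_
  rintro p ⟨⟨hp, t, ht⟩, hpbad⟩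
  simp only [Set.mem_union, Set.mem_ofPred_eq, not_or, not_exists, not_and] at hpbad
  obtain ⟨⟨hpG, hpQ'⟩, hpmn⟩ := hpbad
  have := Fact.mk hp
  obtain ⟨s, hs, hs2⟩ :=
    exists_dvd_eval_not_sq_dvd Q (by exact_mod_cast hp.ne_zero) ht (hpQ' t ht)
  refine ⟨hp, s, ?_⟩
  rw [padicValRat_eval_of_map_eq_C_mul hQG hpmn, eval_mul,
    padicValInt_mul_eq_one hs hs2 (hpG s hs), Nat.cast_one]

/-- Let `h ∈ ℚ[t]` be a nonconstant polynomial that is not squarefull, i.e. some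
irreducible factor of `h` appears with multiplicity exactly one. Then there exist
infinitely many primes `p` such that for some integer `t₀` the prime `p` exactly divides
`h(t₀)` (in the sense that the `p`-adic valuation of the rational number `h(t₀)` is `1`). -/
theorem infinitely_many_exact_prime_divisors (h : ℚ[X]) (hdeg : 0 < h.natDegree)
    (hnsf : ∃ q : ℚ[X], Irreducible q ∧ q ∣ h ∧ ¬ q ^ 2 ∣ h) :
    {p : ℕ | p.Prime ∧ ∃ t₀ : ℤ, padicValRat p (h.eval (t₀ : ℚ)) = 1}.Infinite :=
  infinitely_many_exact_prime_divisors_general h hnsf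
end

section
/- Let f and h be coprime polynomials in ℚ[x]. The number of pairs of polynomials (F, G) with F, G ∈ ℚ[x], at least one of F, G monic, deg F ≤ d, deg G ≤ d, and F^2 − f·G^2 = h, is finite; in fact it is bounded by a constant depending only on d and deg h. -/
/-!
For two solutions put `B = F₁ G₂ - F₂ G₁` and `u = F₁ F₂ - f G₁ G₂`. Brahmagupta's identity gives
`u² - f B² = h²`; as `deg f` is odd, the degrees of `u²` and `f B²` have different parities, so
`deg (f B²) ≤ 2 deg h`. Hence `h ∣ B` forces `B = 0`, and then `(F₂, G₂) = ±(F₁, G₁)`.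

Divisibility `h ∣ B` is detected prime by prime. If `p ^ k ∥ h` then `p ∤ 2 f`, and writing
`p ^ a` for the exact power of `p` dividing both `F` and `G`, the residue `F / G` is defined modulo
`p ^ (k - 2 a)` and is a square root of `f` there, hence determined up to sign. Two solutions
sharing `a` and this residue satisfy `p ^ k ∣ B`. So there are at most `k + 2 ≤ 3 ^ k` local
invariants at `p`, and at most `2 · 3 ^ (deg h)` solutions.
-/

open Polynomial UniqueFactorizationMonoid

theorem Nat.add_two_le_three_pow {k : ℕ} (hk : k ≠ 0) : k + 2 ≤ 3 ^ k := by
  induction k with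
  | zero => contradiction
  | succ n ih =>
    rcases eq_or_ne n 0 with rfl | hn
    · norm_num
    · have := ih hn
      rw [pow_succ]
      omega

theorem finite_and_natCard_le_two_mul_of_fiber_subset_pair {α β : Type*} [Finite β] (g : α → β)
    (σ : α → α) (hg : ∀ x y, g x = g y → y = x ∨ y = σ x) :
    Finite α ∧ Nat.card α ≤ 2 * Nat.card β := by
  classical
  rcases isEmpty_or_nonempty α with hα | hα
  · exact ⟨inferInstance, by simp⟩
  let ψ : α → β × Bool := fun x => (g x, decide (x = Function.invFun g (g x)))
  have hψ : ψ.Injective := by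
    intro x y hxy
    simp only [ψ, Prod.mk.injEq] at hxy
    obtain ⟨hgxy, hbit⟩ := hxy
    rw [← hgxy] at hbit
    have hr : g (Function.invFun g (g x)) = g x := Function.invFun_eq ⟨x, rfl⟩
    generalize Function.invFun g (g x) = r at hbit hr
    by_cases hx : x = r
    · rw [hx, (decide_eq_decide.mp hbit).mp hx]
    · have hy : y ≠ r := fun hy => hx ((decide_eq_decide.mp hbit).mpr hy)
      rw [(hg _ _ hr).resolve_left hx, (hg _ _ (hr.trans hgxy)).resolve_left hy]
  refine ⟨Finite.of_injective ψ hψ, ?_⟩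
  simpa [Nat.card_prod, mul_comm] using Nat.card_le_card_of_injective ψ hψ

theorem Ideal.Quotient.mk_span_singleton_eq_iff {R : Type*} [CommRing R] {a b c : R} :
    Ideal.Quotient.mk (Ideal.span {c}) a = Ideal.Quotient.mk _ b ↔ c ∣ a - b := by
  rw [Ideal.Quotient.eq, Ideal.mem_span_singleton]

section NormalizedFactors

variable {α : Type*} [CommMonoidWithZero α] [NormalizationMonoid α]
  [UniqueFactorizationMonoid α] [DecidableEq α]

theorem UniqueFactorizationMonoid.pow_count_dvd_and_not_pow_succ_dvd {p a : α}
    (hp : p ∈ normalizedFactors a) :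
    p ^ (normalizedFactors a).count p ∣ a ∧ ¬p ^ ((normalizedFactors a).count p + 1) ∣ a := by
  have ha : a ≠ 0 := by
    rintro rfl
    simp at hp
  rw [← emultiplicity_eq_coe, emultiplicity_eq_count_normalizedFactors
    (irreducible_of_normalized_factor p hp) ha, normalize_normalized_factor p hp]

theorem UniqueFactorizationMonoid.dvd_of_forall_pow_count_dvd {a b : α} (ha : a ≠ 0)
    (H : ∀ p ∈ normalizedFactors a, p ^ (normalizedFactors a).count p ∣ b) : a ∣ b := by
  rcases eq_or_ne b 0 with rfl | hb
  · exact dvd_zero a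
  rw [dvd_iff_normalizedFactors_le_normalizedFactors ha hb, Multiset.le_iff_count]
  intro q
  by_cases hq : q ∈ normalizedFactors a
  · have := le_emultiplicity_of_pow_dvd (H q hq)
    rwa [emultiplicity_eq_count_normalizedFactors (irreducible_of_normalized_factor q hq) hb,
      normalize_normalized_factor q hq, Nat.cast_le] at this
  · simp [Multiset.count_eq_zero_of_notMem hq]

end NormalizedFactors

section SquareRoots

variable {R : Type*} [CommRing R] [IsDomain R] {p f : R}

theorem Prime.pow_dvd_sub_or_pow_dvd_add_of_sq_sub (hp : Prime p) (hp2 : ¬p ∣ 2)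
    (hpf : ¬p ∣ f) {m : ℕ} {S T : R} (hS : p ^ m ∣ S ^ 2 - f) (hT : p ^ m ∣ T ^ 2 - f) :
    p ^ m ∣ T - S ∨ p ^ m ∣ T + S := by
  rcases Nat.eq_zero_or_pos m with rfl | hm
  · simp
  have hpS : ¬p ∣ S := fun hpS => hpf <| by
    have := (dvd_pow hpS two_ne_zero).sub ((dvd_pow_self p hm.ne').trans hS)
    rwa [sub_sub_cancel] at this
  have hprod : p ^ m ∣ (T - S) * (T + S) := by
    convert hT.sub hS using 1
    ring
  by_cases hpTS : p ∣ T - S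
  · refine .inl (hp.pow_dvd_of_dvd_mul_right m (fun hpTS' => ?_) hprod)
    have h2S : p ∣ 2 * S := by
      convert hpTS'.sub hpTS using 1
      ring
    exact (hp.dvd_or_dvd h2S).elim hp2 hpS
  · exact .inr (hp.pow_dvd_of_dvd_mul_left m hpTS hprod)

theorem Prime.finite_and_natCard_sq_eq_mk_le_two (hp : Prime p) (hp2 : ¬p ∣ 2) (hpf : ¬p ∣ f)
    (m : ℕ) :
    Finite {s : R ⧸ Ideal.span {p ^ m} // s ^ 2 = Ideal.Quotient.mk _ f} ∧
      Nat.card {s : R ⧸ Ideal.span {p ^ m} // s ^ 2 = Ideal.Quotient.mk _ f} ≤ 2 := by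
  have hsqrt : ∀ s t : {s : R ⧸ Ideal.span {p ^ m} // s ^ 2 = Ideal.Quotient.mk _ f},
      t.1 = s.1 ∨ t.1 = -s.1 := by
    rintro ⟨s, hs⟩ ⟨t, ht⟩
    obtain ⟨S, rfl⟩ := Ideal.Quotient.mk_surjective s
    obtain ⟨T, rfl⟩ := Ideal.Quotient.mk_surjective t
    rw [← map_pow, Ideal.Quotient.mk_span_singleton_eq_iff] at hs ht
    rw [← map_neg, Ideal.Quotient.mk_span_singleton_eq_iff,
      Ideal.Quotient.mk_span_singleton_eq_iff, sub_neg_eq_add]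
    exact hp.pow_dvd_sub_or_pow_dvd_add_of_sq_sub hp2 hpf hs ht
  simpa using finite_and_natCard_le_two_mul_of_fiber_subset_pair (fun _ => ())
    (fun s => ⟨-s.1, by rw [neg_sq]; exact s.2⟩) fun s t _ =>
      (hsqrt s t).imp Subtype.ext Subtype.ext

end SquareRoots

section LocalInvariant

variable {R : Type*} [EuclideanDomain R] {p f : R}

theorem Prime.max_common_power_factor (hp : Prime p) {F G : R}
    (hFG : ¬(F = 0 ∧ G = 0)) :
    ∃ a F₀ G₀, F = p ^ a * F₀ ∧ G = p ^ a * G₀ ∧ ¬(p ∣ F₀ ∧ p ∣ G₀) := by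
  classical
  have hg : EuclideanDomain.gcd F G ≠ 0 := by rwa [Ne, EuclideanDomain.gcd_eq_zero_iff]
  obtain ⟨a, g₀, hpg₀, hg₀⟩ := WfDvdMonoid.max_power_factor hg hp.irreducible
  obtain ⟨F₁, hF₁⟩ := EuclideanDomain.gcd_dvd_left F G
  obtain ⟨G₁, hG₁⟩ := EuclideanDomain.gcd_dvd_right F G
  refine ⟨a, g₀ * F₁, g₀ * G₁, by rw [hF₁, hg₀, mul_assoc], by rw [hG₁, hg₀, mul_assoc], ?_⟩
  rintro ⟨hpF, hpG⟩
  refine hpg₀ ((mul_dvd_mul_iff_left (pow_ne_zero a hp.ne_zero)).mp ?_)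
  rw [← hg₀]
  apply EuclideanDomain.dvd_gcd
  · rw [hF₁, hg₀, mul_assoc]
    exact mul_dvd_mul_left _ hpF
  · rw [hG₁, hg₀, mul_assoc]
    exact mul_dvd_mul_left _ hpG

theorem Prime.exists_sq_sub_dvd_and_sub_mul_dvd (hp : Prime p) {F₀ G₀ : R}
    (hFG : ¬(p ∣ F₀ ∧ p ∣ G₀)) {m : ℕ} (hm : p ^ m ∣ F₀ ^ 2 - f * G₀ ^ 2) :
    ∃ S, p ^ m ∣ S ^ 2 - f ∧ p ^ m ∣ F₀ - S * G₀ := by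
  by_cases hpG : p ∣ G₀
  · suffices m = 0 from ⟨0, by simp [this]⟩
    by_contra hm0
    have hpF : p ∣ F₀ ^ 2 := by
      have := ((dvd_pow_self p hm0).trans hm).add ((dvd_pow hpG two_ne_zero).mul_left f)
      rwa [sub_add_cancel] at this
    exact hFG ⟨hp.dvd_of_dvd_pow hpF, hpG⟩
  obtain ⟨U, V, hUV⟩ := (hp.coprime_iff_not_dvd.mpr hpG).pow_left (m := m)
  refine ⟨F₀ * V, ?_, F₀ * U, by linear_combination -F₀ * hUV⟩
  have hpG2 : ¬p ∣ G₀ ^ 2 := fun h => hpG (hp.dvd_of_dvd_pow h)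
  refine hp.pow_dvd_of_dvd_mul_left m hpG2 ?_
  have hid : G₀ ^ 2 * ((F₀ * V) ^ 2 - f) =
      (F₀ ^ 2 - f * G₀ ^ 2) - p ^ m * (F₀ ^ 2 * U * (V * G₀ + 1)) := by
    linear_combination F₀ ^ 2 * (V * G₀ + 1) * hUV
  rw [hid]
  exact hm.sub (dvd_mul_right _ _)

/-- A local invariant at `p` of a pair `(F, G)` with `p ^ k ∥ F ^ 2 - f * G ^ 2`: the exponent `a`
of `p` in `gcd F G`, and the residue of `F / G` modulo `p ^ (k - 2 * a)`, a square root of `f`. -/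
def LocalInvariant (p f : R) (k : ℕ) : Type _ :=
  Σ a : Fin (k / 2 + 1),
    {s : R ⧸ Ideal.span {p ^ (k - 2 * (a : ℕ))} // s ^ 2 = Ideal.Quotient.mk _ f}

namespace LocalInvariant

variable {k : ℕ}

def IsInvariantOf (v : LocalInvariant p f k) (F G : R) : Prop :=
  p ^ (v.1 : ℕ) ∣ G ∧ ∃ S, Ideal.Quotient.mk _ S = v.2.1 ∧ p ^ (k - v.1) ∣ F - S * G

theorem exists_isInvariantOf (hp : Prime p) {F G : R}
    (hk : p ^ k ∣ F ^ 2 - f * G ^ 2) (hk' : ¬p ^ (k + 1) ∣ F ^ 2 - f * G ^ 2) :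
    ∃ v : LocalInvariant p f k, v.IsInvariantOf F G := by
  have hFG : ¬(F = 0 ∧ G = 0) := by
    rintro ⟨rfl, rfl⟩
    simp at hk'
  obtain ⟨a, F₀, G₀, rfl, rfl, hFG₀⟩ := hp.max_common_power_factor hFG
  have hD : (p ^ a * F₀) ^ 2 - f * (p ^ a * G₀) ^ 2 = p ^ (2 * a) * (F₀ ^ 2 - f * G₀ ^ 2) := by
    ring
  rw [hD] at hk hk'
  have ha : 2 * a ≤ k := by
    by_contra! ha
    exact hk' ((pow_dvd_pow p ha).mul_right _)
  have hm : p ^ (k - 2 * a) ∣ F₀ ^ 2 - f * G₀ ^ 2 := by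
    rwa [← Nat.add_sub_cancel' ha, pow_add,
      mul_dvd_mul_iff_left (pow_ne_zero _ hp.ne_zero)] at hk
  obtain ⟨S, hS, hFS⟩ := hp.exists_sq_sub_dvd_and_sub_mul_dvd hFG₀ hm
  refine ⟨⟨⟨a, by omega⟩, Ideal.Quotient.mk _ S,
    by rw [← map_pow, Ideal.Quotient.mk_span_singleton_eq_iff]; exact hS⟩,
    dvd_mul_right _ _, S, rfl, ?_⟩
  have he : p ^ a * F₀ - S * (p ^ a * G₀) = p ^ a * (F₀ - S * G₀) := by ring
  rw [he, show k - a = a + (k - 2 * a) by omega, pow_add]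
  exact mul_dvd_mul_left _ hFS

theorem IsInvariantOf.pow_dvd_cross {v : LocalInvariant p f k} {F₁ G₁ F₂ G₂ : R}
    (h₁ : v.IsInvariantOf F₁ G₁) (h₂ : v.IsInvariantOf F₂ G₂) : p ^ k ∣ F₁ * G₂ - F₂ * G₁ := by
  obtain ⟨⟨a, ha⟩, s, hs⟩ := v
  obtain ⟨hG₁, S₁, hS₁, hF₁⟩ := h₁
  obtain ⟨hG₂, S₂, hS₂, hF₂⟩ := h₂
  dsimp only at *
  have hS : p ^ (k - 2 * a) ∣ S₁ - S₂ :=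
    Ideal.Quotient.mk_span_singleton_eq_iff.mp (hS₁.trans hS₂.symm)
  have hk₁ : p ^ k = p ^ (k - a) * p ^ a := by rw [← pow_add]; congr 1; omega
  have hk₂ : p ^ k = p ^ (k - 2 * a) * p ^ a * p ^ a := by
    rw [← pow_add, ← pow_add]; congr 1; omega
  have he : F₁ * G₂ - F₂ * G₁ =
      (F₁ - S₁ * G₁) * G₂ - (F₂ - S₂ * G₂) * G₁ + (S₁ - S₂) * G₁ * G₂ := by ring
  rw [he]
  refine ((hk₁ ▸ mul_dvd_mul hF₁ hG₂).sub (hk₁ ▸ mul_dvd_mul hF₂ hG₁)).add ?_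
  exact hk₂ ▸ mul_dvd_mul (mul_dvd_mul hS hG₁) hG₂

theorem finite_and_natCard_le (hp : Prime p) (hp2 : ¬p ∣ 2) (hpf : ¬p ∣ f) (k : ℕ) :
    Finite (LocalInvariant p f k) ∧ Nat.card (LocalInvariant p f k) ≤ k + 2 := by
  have hsqrt := fun a : Fin (k / 2 + 1) =>
    Prime.finite_and_natCard_sq_eq_mk_le_two hp hp2 hpf (k - 2 * (a : ℕ))
  have := fun a => (hsqrt a).1
  refine ⟨inferInstanceAs (Finite (Sigma _)), ?_⟩
  calc Nat.card (LocalInvariant p f k)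
      = ∑ a : Fin (k / 2 + 1), Nat.card {s : R ⧸ Ideal.span {p ^ (k - 2 * (a : ℕ))} //
          s ^ 2 = Ideal.Quotient.mk _ f} := Nat.card_sigma
    _ ≤ ∑ _a : Fin (k / 2 + 1), 2 := Finset.sum_le_sum fun a _ => (hsqrt a).2
    _ ≤ k + 2 := by
      rw [Finset.sum_const, Finset.card_univ, Fintype.card_fin, smul_eq_mul]
      omega

end LocalInvariant

end LocalInvariant

section SolutionInvariant

variable {R : Type*} [EuclideanDomain R] [NormalizationMonoid R] [DecidableEq R]

def SolutionInvariant (f h : R) : Type _ :=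
  (p : (normalizedFactors h).toFinset) →
    LocalInvariant (p : R) f ((normalizedFactors h).count (p : R))

namespace SolutionInvariant

variable {f h : R}

theorem exists_forall_isInvariantOf {F G : R} (hFG : F ^ 2 - f * G ^ 2 = h) :
    ∃ v : SolutionInvariant f h, ∀ p, (v p).IsInvariantOf F G := by
  choose v hv using fun p : (normalizedFactors h).toFinset => by
    have hp := Multiset.mem_toFinset.mp p.2
    obtain ⟨hk, hk'⟩ := UniqueFactorizationMonoid.pow_count_dvd_and_not_pow_succ_dvd hp
    exact LocalInvariant.exists_isInvariantOf (F := F) (G := G) (prime_of_normalized_factor _ hp)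
      (by rwa [hFG]) (by rwa [hFG])
  exact ⟨v, hv⟩

theorem dvd_cross_of_forall_isInvariantOf (hh : h ≠ 0) {v : SolutionInvariant f h}
    {F₁ G₁ F₂ G₂ : R} (h₁ : ∀ p, (v p).IsInvariantOf F₁ G₁) (h₂ : ∀ p, (v p).IsInvariantOf F₂ G₂) :
    h ∣ F₁ * G₂ - F₂ * G₁ :=
  UniqueFactorizationMonoid.dvd_of_forall_pow_count_dvd hh fun p hp =>
    (h₁ ⟨p, Multiset.mem_toFinset.mpr hp⟩).pow_dvd_cross (h₂ ⟨p, Multiset.mem_toFinset.mpr hp⟩)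

theorem finite_and_natCard_le (h2 : IsUnit (2 : R)) (hfh : IsCoprime f h) :
    Finite (SolutionInvariant f h) ∧
      Nat.card (SolutionInvariant f h) ≤ 3 ^ Multiset.card (normalizedFactors h) := by
  have hloc := fun p : (normalizedFactors h).toFinset =>
    have hp := Multiset.mem_toFinset.mp p.2
    have hpr := prime_of_normalized_factor _ hp
    LocalInvariant.finite_and_natCard_le (f := f) hpr
      (fun hp2 => hpr.not_isUnit (isUnit_of_dvd_unit hp2 h2))
      (fun hpf => hpr.not_isUnit (hfh.isUnit_of_dvd' hpf (dvd_of_mem_normalizedFactors hp)))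
      ((normalizedFactors h).count (p : R))
  have := fun p => (hloc p).1
  refine ⟨Pi.finite, ?_⟩
  calc Nat.card (SolutionInvariant f h)
      = ∏ p : (normalizedFactors h).toFinset,
          Nat.card (LocalInvariant (p : R) f ((normalizedFactors h).count (p : R))) := Nat.card_pi
    _ ≤ ∏ p : (normalizedFactors h).toFinset, 3 ^ (normalizedFactors h).count (p : R) := by
      refine Finset.prod_le_prod' fun p _ => (hloc p).2.trans (Nat.add_two_le_three_pow ?_)
      exact Multiset.count_ne_zero.mpr (Multiset.mem_toFinset.mp p.2)
    _ = 3 ^ Multiset.card (normalizedFactors h) := by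
      rw [Finset.prod_coe_sort (normalizedFactors h).toFinset
        (fun p => 3 ^ (normalizedFactors h).count (p : R)), Finset.prod_pow_eq_pow_sum,
        Multiset.toFinset_sum_count_eq]

end SolutionInvariant

end SolutionInvariant

namespace Polynomial

theorem natDegree_mul_sq_le_natDegree_sq_sub {R : Type*} [CommRing R] [IsDomain R] {f : R[X]}
    (hf : Odd f.natDegree) (A B : R[X]) :
    (f * B ^ 2).natDegree ≤ (A ^ 2 - f * B ^ 2).natDegree := by
  rcases eq_or_ne B 0 with rfl | hB
  · simp
  have hf0 : f ≠ 0 := by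
    rintro rfl
    simp at hf
  have hfB : (f * B ^ 2).natDegree = f.natDegree + 2 * B.natDegree := by
    rw [natDegree_mul hf0 (pow_ne_zero 2 hB), natDegree_pow]
  obtain ⟨c, hc⟩ := hf
  rcases lt_or_gt_of_ne (show (A ^ 2).natDegree ≠ (f * B ^ 2).natDegree by
    rw [natDegree_pow]; omega) with hlt | hlt
  · rw [natDegree_sub_eq_right_of_natDegree_lt hlt]
  · rw [natDegree_sub_eq_left_of_natDegree_lt hlt]
    exact hlt.le

theorem eq_or_eq_neg_of_dvd_cross {R : Type*} [CommRing R] [IsDomain R] {f h F₁ G₁ F₂ G₂ : R[X]}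
    (hf : Odd f.natDegree) (hh : h ≠ 0) (h₁ : F₁ ^ 2 - f * G₁ ^ 2 = h)
    (h₂ : F₂ ^ 2 - f * G₂ ^ 2 = h) (hdvd : h ∣ F₁ * G₂ - F₂ * G₁) :
    (F₂, G₂) = (F₁, G₁) ∨ (F₂, G₂) = -(F₁, G₁) := by
  set u := F₁ * F₂ - f * (G₁ * G₂)
  have hB : F₁ * G₂ - F₂ * G₁ = 0 := by
    by_contra hB
    have hdeg := natDegree_mul_sq_le_natDegree_sq_sub hf u (F₁ * G₂ - F₂ * G₁)
    rw [show u ^ 2 - f * (F₁ * G₂ - F₂ * G₁) ^ 2 = h ^ 2 by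
        linear_combination (F₂ ^ 2 - f * G₂ ^ 2) * h₁ + h * h₂,
      natDegree_mul (by rintro rfl; simp at hf) (pow_ne_zero 2 hB), natDegree_pow,
      natDegree_pow] at hdeg
    have := natDegree_le_of_dvd hdvd hB
    have := hf.pos
    omega
  have hu : u ^ 2 = h ^ 2 := by
    linear_combination (F₂ ^ 2 - f * G₂ ^ 2) * h₁ + h * h₂ + f * (F₁ * G₂ - F₂ * G₁) * hB
  have hF : F₂ * h = F₁ * u := by linear_combination -F₂ * h₁ + f * G₁ * hB
  have hG : G₂ * h = G₁ * u := by linear_combination -G₂ * h₁ + F₁ * hB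
  rcases sq_eq_sq_iff_eq_or_eq_neg.mp hu with hu | hu
  · rw [hu] at hF hG
    exact .inl (Prod.ext (mul_right_cancel₀ hh hF) (mul_right_cancel₀ hh hG))
  · rw [hu, mul_neg, ← neg_mul] at hF hG
    exact .inr (Prod.ext (mul_right_cancel₀ hh hF) (mul_right_cancel₀ hh hG))

theorem card_normalizedFactors_le_natDegree {K : Type*} [Field K] [DecidableEq K] (h : K[X]) :
    Multiset.card (normalizedFactors h) ≤ h.natDegree := by
  rcases eq_or_ne h 0 with rfl | hh
  · simp
  calc Multiset.card (normalizedFactors h)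
      ≤ ((normalizedFactors h).map natDegree).sum := by
        simpa using Multiset.card_nsmul_le_sum (s := (normalizedFactors h).map natDegree) (a := 1)
          (Multiset.forall_mem_map_iff.mpr fun p hp =>
            (irreducible_of_normalized_factor p hp).natDegree_pos)
    _ = (normalizedFactors h).prod.natDegree :=
      (natDegree_multiset_prod _ (zero_notMem_normalizedFactors _)).symm
    _ ≤ h.natDegree := natDegree_le_of_dvd (prod_normalizedFactors hh).dvd hh

theorem finite_and_natCard_sq_sub_mul_sq_eq_le {K : Type*} [Field K] (h2 : (2 : K) ≠ 0)
    {f h : K[X]} (hf : Odd f.natDegree) (hfh : IsCoprime f h) :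
    {z : K[X] × K[X] | z.1 ^ 2 - f * z.2 ^ 2 = h}.Finite ∧
      Nat.card {z : K[X] × K[X] | z.1 ^ 2 - f * z.2 ^ 2 = h} ≤ 2 * 3 ^ h.natDegree := by
  classical
  have hh : h ≠ 0 := by
    rintro rfl
    have := natDegree_eq_zero_of_isUnit (isCoprime_zero_right.mp hfh)
    simp [this] at hf
  obtain ⟨hTfin, hTcard⟩ := SolutionInvariant.finite_and_natCard_le (f := f)
    (by rw [← map_ofNat C 2]; exact isUnit_C.mpr h2.isUnit) hfh
  choose Φ hΦ using fun z : {z : K[X] × K[X] | z.1 ^ 2 - f * z.2 ^ 2 = h} =>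
    SolutionInvariant.exists_forall_isInvariantOf z.2
  obtain ⟨hfin, hcard⟩ := finite_and_natCard_le_two_mul_of_fiber_subset_pair Φ
    (fun z => ⟨-z.1, by
      rw [Set.mem_ofPred_eq, Prod.fst_neg, Prod.snd_neg, neg_sq, neg_sq]; exact z.2⟩)
    fun z₁ z₂ hz => by
      have := eq_or_eq_neg_of_dvd_cross hf hh z₁.2 z₂.2
        (SolutionInvariant.dvd_cross_of_forall_isInvariantOf hh (hΦ z₁) (hz ▸ hΦ z₂))
      exact this.imp Subtype.ext Subtype.ext
  refine ⟨Set.finite_coe_iff.mp hfin, hcard.trans ?_⟩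
  gcongr
  exact hTcard.trans (Nat.pow_le_pow_right three_pos (card_normalizedFactors_le_natDegree h))

end Polynomial

/-- Let `f` be a squarefree cubic over `ℚ` (so `y² = f(x)` defines an elliptic curve) and
`h ∈ ℚ[x]` coprime to `f`. The number of pairs `(F, G)` of polynomials over `ℚ` with at
least one of `F`, `G` monic, `deg F ≤ d`, `deg G ≤ d`, and `F² - f G² = h`, is finite and
bounded by a constant depending only on `d` and `deg h`. -/
theorem finitely_many_representations (d e : ℕ) :
    ∃ C : ℕ, ∀ f h : ℚ[X], f.natDegree = 3 → Squarefree f → IsCoprime f h →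
      h.natDegree = e →
      {FG : ℚ[X] × ℚ[X] | (FG.1.Monic ∨ FG.2.Monic) ∧ FG.1.natDegree ≤ d ∧
          FG.2.natDegree ≤ d ∧ FG.1 ^ 2 - f * FG.2 ^ 2 = h}.Finite ∧
        Nat.card {FG : ℚ[X] × ℚ[X] // (FG.1.Monic ∨ FG.2.Monic) ∧ FG.1.natDegree ≤ d ∧
          FG.2.natDegree ≤ d ∧ FG.1 ^ 2 - f * FG.2 ^ 2 = h} ≤ C := by
  refine ⟨2 * 3 ^ e, fun f h hf3 _ hfh he => ?_⟩
  obtain ⟨hfin, hcard⟩ := Polynomial.finite_and_natCard_sq_sub_mul_sq_eq_le two_ne_zero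
    (by rw [hf3]; decide) hfh
  have hsub : {FG : ℚ[X] × ℚ[X] | (FG.1.Monic ∨ FG.2.Monic) ∧ FG.1.natDegree ≤ d ∧
      FG.2.natDegree ≤ d ∧ FG.1 ^ 2 - f * FG.2 ^ 2 = h} ⊆
        {z : ℚ[X] × ℚ[X] | z.1 ^ 2 - f * z.2 ^ 2 = h} := fun z hz => hz.2.2.2
  exact ⟨hfin.subset hsub, he ▸ (Nat.card_mono hfin hsub).trans hcard⟩
end

section
/- Let d be an even integer with d ≥ 4. The polynomial T(x) = (x^{d/2} + 1/100)^2 − (9/10)^2 x^3 has exactly two real roots, while T_0(x) = (x^{d/2} + 1/100)^2 − (1/100)^2 x^3 has no real roots; consequently Disc(T) and Disc(T_0) have opposite signs. -/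
open Polynomial

/-!
Write `T = (X^m + c)² - k X³` with `m = d/2`. It is positive on `x ≤ 0`, and for `x > 0`,
`T(x) / (c² x³) = x⁻³ + c⁻² x^(2m-3) + 2c⁻¹ x^(m-3) - k/c²` is strictly convex, so `T` has at most
two real roots; for `k = (9/10)²` the sign changes on `0 < 1/4 < 1` give two of them. For
`k = c²` a direct comparison of `c² x³` with `c²` and `x^(2m)` shows `T > 0`.

A common complex root `z` of `T` and `T'` satisfies `zᵐ = 3c/(2m-3)` and `z³ = (2mc/(2m-3))²/k`;
comparing `(zᵐ)³` with `(z³)ᵐ` rules this out for both values of `k`, so both polynomials are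
separable. For a separable real polynomial the nonreal roots come in conjugate pairs, which
contribute `|p'(z)|² > 0` to `∏ p'(r)`. So the discriminant of `T₀` has the sign of
`(-1)^(m(2m-1))`, while that of `T` has the opposite sign, because `p'` takes opposite signs at
the two simple real roots of `T`.
-/

namespace Polynomial

theorem separable_of_aeval_derivative_ne_zero {F K : Type*} [Field F] [Field K] [IsAlgClosed K]
    [Algebra F K] {p : F[X]} (h : ∀ z : K, aeval z p = 0 → aeval z (derivative p) ≠ 0) :
    p.Separable := by
  classical
  have hp : p ≠ 0 := by
    rintro rfl
    exact h 0 (aeval_zero _) (by rw [derivative_zero, aeval_zero])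
  rw [← nodup_aroots_iff_of_splits hp (IsAlgClosed.splits (p.map (algebraMap F K))),
    Multiset.nodup_iff_count_le_one]
  intro z
  by_contra! hz
  rw [count_roots, one_lt_rootMultiplicity_iff_isRoot (map_ne_zero hp), IsRoot, IsRoot,
    derivative_map, eval_map_algebraMap, eval_map_algebraMap] at hz
  exact h z hz.1 hz.2

theorem map_conj_aroots_complex (p : ℝ[X]) :
    (p.aroots ℂ).map (starRingEnd ℂ) = p.aroots ℂ := by
  have hconj : (starRingEnd ℂ).comp (algebraMap ℝ ℂ) = algebraMap ℝ ℂ := by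
    ext x
    exact Complex.conj_ofReal x
  rw [aroots_def, ← (IsAlgClosed.splits _).roots_map, map_map, hconj]

theorem filter_im_eq_zero_aroots_complex (p : ℝ[X]) :
    (p.aroots ℂ).filter (fun z => z.im = 0) = p.roots.map ((↑) : ℝ → ℂ) := by
  by_cases hp : p = 0
  · simp [hp]
  ext z
  by_cases hz : z.im = 0
  · obtain ⟨x, rfl⟩ : ∃ x : ℝ, (x : ℂ) = z := ⟨z.re, Complex.ext rfl hz.symm⟩
    rw [Multiset.count_filter_of_pos (p := fun z : ℂ => z.im = 0) hz,
      Multiset.count_map_eq_count' _ _ Complex.ofReal_injective, aroots_def, count_roots,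
      count_roots, ← Complex.coe_algebraMap, ← eq_rootMultiplicity_map (algebraMap ℝ ℂ).injective]
  · rw [Multiset.count_filter_of_neg (p := fun z : ℂ => z.im = 0) hz, eq_comm,
      Multiset.count_eq_zero]
    intro hmem
    obtain ⟨x, -, rfl⟩ := Multiset.mem_map.mp hmem
    exact hz (Complex.ofReal_im x)

theorem exists_pos_prod_aroots_complex_eq (p h : ℝ[X]) (hh : ∀ z ∈ p.aroots ℂ, aeval z h ≠ 0) :
    ∃ v : ℝ, 0 < v ∧ ((p.aroots ℂ).map fun z => aeval z h).prod =
      ↑((p.roots.map fun x => h.eval x).prod * v) := by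
  set R := p.aroots ℂ
  set U := R.filter (fun z => 0 < z.im)
  have hsplit : R = R.filter (fun z => z.im = 0) + (U + U.map (starRingEnd ℂ)) := by
    have hlower : U.map (starRingEnd ℂ) = R.filter (fun z => z.im < 0) := by
      have hR : R.map (starRingEnd ℂ) = R := map_conj_aroots_complex p
      conv_rhs => rw [← hR, Multiset.filter_map]
      simp only [Function.comp_def, Complex.conj_im, Left.neg_neg_iff, U]
    rw [hlower, Multiset.filter_add_filter,
      (Multiset.filter_eq_nil (p := fun z : ℂ => 0 < z.im ∧ z.im < 0)).2 fun z _ h => by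
        linarith [h.1, h.2],
      add_zero, Multiset.filter_congr fun z _ => lt_or_lt_iff_ne.trans ne_comm]
    exact (Multiset.filter_add_not _ _).symm
  have hconj : ((U.map (starRingEnd ℂ)).map fun z => aeval z h).prod =
      starRingEnd ℂ (U.map fun z => aeval z h).prod := by
    rw [map_multiset_prod, Multiset.map_map, Multiset.map_map]
    simp only [Function.comp_def, aeval_conj]
  refine ⟨Complex.normSq (U.map fun z => aeval z h).prod, Complex.normSq_pos.2 ?_, ?_⟩
  · refine Multiset.prod_ne_zero fun h0 => ?_
    obtain ⟨z, hz, hz0⟩ := Multiset.mem_map.mp h0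
    exact hh z (Multiset.mem_of_mem_filter hz) hz0
  · have hreal : ((p.roots.map ((↑) : ℝ → ℂ)).map fun z => aeval z h).prod =
        ((p.roots.map fun x => h.eval x).prod : ℝ) := by
      rw [← Complex.ofRealHom_eq_coe, map_multiset_prod, Multiset.map_map, Multiset.map_map]
      exact congrArg _ (Multiset.map_congr rfl fun x _ => aeval_ofReal h x)
    rw [hsplit, Multiset.map_add, Multiset.prod_add, filter_im_eq_zero_aroots_complex,
      Multiset.map_add, Multiset.prod_add, hconj, Complex.mul_conj, hreal, Complex.ofReal_mul]

theorem card_roots_eq_ncard_of_separable {R : Type*} [CommRing R] [IsDomain R] {p : R[X]}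
    (hp : p.Separable) : p.roots.card = {x | p.eval x = 0}.ncard := by
  classical
  have hset : {x | p.eval x = 0} = ↑p.roots.toFinset := by
    ext x
    simp [mem_roots hp.ne_zero]
  rw [hset, Set.ncard_coe_finset, Multiset.toFinset_card_of_nodup (nodup_roots hp)]

theorem prod_derivative_eval_roots_neg_of_card_eq_two {p : ℝ[X]} (hp : p.Separable)
    (h2 : p.roots.card = 2) : (p.roots.map fun x => (derivative p).eval x).prod < 0 := by
  obtain ⟨x₁, x₂, hroots⟩ := Multiset.card_eq_two.mp h2
  have hne : x₁ ≠ x₂ := by simpa [hroots] using nodup_roots hp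
  obtain ⟨g, hg⟩ : (X - C x₁) * (X - C x₂) ∣ p := by
    simpa [hroots] using prod_multiset_X_sub_C_dvd p
  have e₁ : (derivative p).eval x₁ = (x₁ - x₂) * g.eval x₁ := by
    simp [hg, derivative_mul]
  have e₂ : (derivative p).eval x₂ = (x₂ - x₁) * g.eval x₂ := by
    simp [hg, derivative_mul]
  have hsimple : ∀ x ∈ p.roots, (derivative p).eval x ≠ 0 := fun x hx =>
    hp.aeval_derivative_ne_zero (x := x) (by simpa using (mem_roots hp.ne_zero).mp hx)
  have hg_ne : ∀ y, g.eval y ≠ 0 := by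
    intro y hy
    have hy_root : y ∈ p.roots := (mem_roots hp.ne_zero).mpr (by simp [hg, hy])
    rw [hroots] at hy_root
    rcases Multiset.mem_cons.mp hy_root with rfl | hy₂
    · exact hsimple y (by simp [hroots]) (by rw [e₁, hy, mul_zero])
    · rw [Multiset.mem_singleton.mp hy₂] at hy
      exact hsimple x₂ (by simp [hroots]) (by rw [e₂, hy, mul_zero])
  have hg_pos : 0 < g.eval x₁ * g.eval x₂ := by
    by_contra! hle
    have h0 : (0 : ℝ) ∈ Set.uIcc (g.eval x₁) (g.eval x₂) := by
      rcases mul_nonpos_iff.mp hle with ⟨ha, hb⟩ | ⟨ha, hb⟩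
      · exact Set.mem_uIcc.mpr (Or.inr ⟨hb, ha⟩)
      · exact Set.mem_uIcc.mpr (Or.inl ⟨ha, hb⟩)
    obtain ⟨y, -, hy⟩ := intermediate_value_uIcc g.continuous.continuousOn h0
    exact hg_ne y hy
  have hsq : 0 < (x₁ - x₂) ^ 2 := by positivity
  simp only [hroots, Multiset.insert_eq_cons, Multiset.map_cons, Multiset.map_singleton,
    Multiset.prod_cons, Multiset.prod_singleton, e₁, e₂]
  nlinarith

theorem exists_pos_polyDisc_map_complex_eq {p : ℝ[X]} (hp : p.Separable) :
    ∃ v : ℝ, 0 < v ∧ polyDisc (p.map (algebraMap ℝ ℂ)) =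
      ↑((-1) ^ (p.natDegree * (p.natDegree - 1) / 2) * p.leadingCoeff ^ (p.natDegree - 2) *
        (p.roots.map fun x => (derivative p).eval x).prod * v) := by
  obtain ⟨v, hv, hprod⟩ := exists_pos_prod_aroots_complex_eq p (derivative p) fun z hz =>
    hp.aeval_derivative_ne_zero (mem_aroots.mp hz).2
  refine ⟨v, hv, ?_⟩
  have hroots : ((p.map (algebraMap ℝ ℂ)).roots.map
      fun r => (derivative (p.map (algebraMap ℝ ℂ))).eval r) =
      (p.aroots ℂ).map fun z => aeval z (derivative p) := by
    simp only [derivative_map, eval_map_algebraMap, aroots_def]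
  rw [polyDisc, natDegree_map, leadingCoeff_map, hroots, hprod, Complex.coe_algebraMap]
  push_cast
  ring

end Polynomial

theorem StrictConvexOn.eq_or_eq_of_map_eq_zero {𝕜 β : Type*} [Field 𝕜] [LinearOrder 𝕜]
    [IsStrictOrderedRing 𝕜] [AddCommMonoid β] [LinearOrder β] [IsOrderedAddMonoid β]
    [Module 𝕜 β] [PosSMulStrictMono 𝕜 β] {s : Set 𝕜} {f : 𝕜 → β}
    (hf : StrictConvexOn 𝕜 s f) {x y z : 𝕜} (hx : x ∈ s) (hy : y ∈ s) (hz : z ∈ s) (hxy : x < y)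
    (hfx : f x = 0) (hfy : f y = 0) (hfz : f z = 0) : z = x ∨ z = y := by
  have hmiddle : ∀ a ∈ s, ∀ b ∈ s, ∀ c ∈ s, a < b → b < c → f a = 0 → f c = 0 → f b ≠ 0 := by
    intro a ha b _ c hc hab hbc hfa hfc hfb
    have hb : b ∈ openSegment 𝕜 a c := by
      rw [openSegment_eq_Ioo (hab.trans hbc)]
      exact ⟨hab, hbc⟩
    have := hf.lt_on_openSegment ha hc (hab.trans hbc).ne hb
    rw [hfa, hfb, hfc, max_self] at this
    exact this.false
  by_contra! hne
  rcases lt_or_gt_of_ne hne.1 with hzx | hxz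
  · exact hmiddle z hz x hx y hy hzx hxy hfz hfy hfx
  rcases lt_or_gt_of_ne hne.2 with hzy | hyz
  · exact hmiddle x hx z hz y hy hxz hzy hfx hfy hfz
  · exact hmiddle x hx y hy z hz hxy hyz hfx hfz hfy

noncomputable def T (m : ℕ) (c k : ℝ) : ℝ[X] := (X ^ m + C c) ^ 2 - C k * X ^ 3

section T

variable {m : ℕ} {c k : ℝ}

theorem natDegree_C_mul_X_pow_three_lt (hm : 2 ≤ m) :
    (C k * X ^ 3 : ℝ[X]).natDegree < ((X ^ m + C c) ^ 2 : ℝ[X]).natDegree := by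
  rw [natDegree_pow, natDegree_X_pow_add_C]
  exact (natDegree_C_mul_X_pow_le k 3).trans_lt (by omega)

theorem monic_T (hm : 2 ≤ m) : (T m c k).Monic :=
  ((monic_X_pow_add_C c (by omega)).pow 2).sub_of_left
    (degree_lt_degree (natDegree_C_mul_X_pow_three_lt hm))

theorem natDegree_T (hm : 2 ≤ m) : (T m c k).natDegree = 2 * m := by
  rw [T, natDegree_sub_eq_left_of_natDegree_lt (natDegree_C_mul_X_pow_three_lt hm), natDegree_pow,
    natDegree_X_pow_add_C, mul_comm]

@[simp]
theorem eval_T (x : ℝ) : (T m c k).eval x = (x ^ m + c) ^ 2 - k * x ^ 3 := by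
  simp [T]

theorem aeval_T (z : ℂ) : aeval z (T m c k) = (z ^ m + c) ^ 2 - k * z ^ 3 := by
  simp [T]

theorem aeval_derivative_T (z : ℂ) :
    aeval z (derivative (T m c k)) = 2 * (z ^ m + c) * (m * z ^ (m - 1)) - 3 * k * z ^ 2 := by
  simp [T, derivative_pow]
  ring

theorem critical_eq_of_common_root (hm : 2 ≤ m) (hc : c ≠ 0) (hk : k ≠ 0) {z : ℂ}
    (hz : aeval z (T m c k) = 0) (hz' : aeval z (derivative (T m c k)) = 0) :
    (3 * c / (2 * m - 3)) ^ 3 = ((2 * m * c / (2 * m - 3)) ^ 2 / k) ^ m := by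
  rw [aeval_T, sub_eq_zero] at hz
  rw [aeval_derivative_T, sub_eq_zero] at hz'
  have hc' : (c : ℂ) ≠ 0 := Complex.ofReal_ne_zero.mpr hc
  have hk' : (k : ℂ) ≠ 0 := Complex.ofReal_ne_zero.mpr hk
  have hs : (2 * m - 3 : ℂ) ≠ 0 := by
    have : (3 : ℝ) < 2 * m := by norm_cast; omega
    exact_mod_cast (sub_pos.mpr this).ne'
  have hz0 : z ≠ 0 := by
    rintro rfl
    simp [zero_pow (by omega : m ≠ 0), hc'] at hz
  have hw : z ^ m + c ≠ 0 := by
    intro hw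
    rw [hw] at hz
    simp [hk', hz0] at hz
  -- multiply the second equation by `z` and insert the first one
  have hzm : z ^ m = 3 * c / (2 * m - 3) := by
    have h : 2 * m * z ^ m * (z ^ m + c) = 3 * (z ^ m + c) * (z ^ m + c) := by
      have hpow : z ^ (m - 1) * z = z ^ m := pow_sub_one_mul (by omega) z
      linear_combination (-2 * m * (z ^ m + c)) * hpow + z * hz' - 3 * hz
    rw [eq_div_iff hs]
    linear_combination mul_right_cancel₀ hw h
  have hz3 : z ^ 3 = (2 * m * c / (2 * m - 3)) ^ 2 / k := by
    rw [eq_div_iff hk', mul_comm, ← hz, hzm]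
    field_simp
    ring
  apply Complex.ofReal_injective
  push_cast
  rw [← hzm, ← hz3, ← pow_mul, ← pow_mul, mul_comm]

theorem separable_T (hm : 2 ≤ m) (hc : c ≠ 0) (hk : k ≠ 0)
    (hcrit : (3 * c / (2 * m - 3)) ^ 3 ≠ ((2 * m * c / (2 * m - 3)) ^ 2 / k) ^ m) :
    (T m c k).Separable :=
  separable_of_aeval_derivative_ne_zero (K := ℂ) fun _ hz hz' =>
    hcrit (critical_eq_of_common_root hm hc hk hz hz')

theorem eval_T_pos_of_nonpos (hc : 0 < c) (hk : 0 < k) {x : ℝ} (hx : x ≤ 0) :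
    0 < (T m c k).eval x := by
  rw [eval_T]
  rcases hx.lt_or_eq with hx | rfl
  · have : k * x ^ 3 < 0 := mul_neg_of_pos_of_neg hk (Odd.pow_neg (by decide) hx)
    nlinarith [sq_nonneg (x ^ m + c)]
  · have : (0 : ℝ) ≤ 0 ^ m := pow_nonneg le_rfl m
    nlinarith

theorem eval_T_sq_pos (hm : 2 ≤ m) (hc : 0 < c) (hc₁ : c ≤ 1) (x : ℝ) :
    0 < (T m c (c ^ 2)).eval x := by
  rcases le_or_gt x 0 with hx | hx
  · exact eval_T_pos_of_nonpos hc (by positivity) hx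
  rw [eval_T]
  have hxm : 0 < x ^ m := pow_pos hx m
  rcases le_or_gt x 1 with hx₁ | hx₁
  · have : x ^ 3 ≤ 1 := pow_le_one₀ hx.le hx₁
    nlinarith
  · have h3 : x ^ 3 ≤ (x ^ m) ^ 2 := by
      rw [← pow_mul]
      exact pow_le_pow_right₀ hx₁.le (by omega)
    have : c ^ 2 ≤ 1 := pow_le_one₀ hc.le hc₁
    nlinarith [pow_pos hx 3]

theorem critical_ineq_sq (hm : 2 ≤ m) (hc : 0 < c) (hc₃ : 3 * c < 1) :
    (3 * c / (2 * m - 3)) ^ 3 < ((2 * m * c / (2 * m - 3)) ^ 2 / c ^ 2) ^ m := by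
  have hm' : (2 : ℝ) ≤ m := by exact_mod_cast hm
  have hs : (1 : ℝ) ≤ 2 * m - 3 := by linarith
  have hlt : (3 * c / (2 * m - 3)) ^ 3 < 1 := by
    refine pow_lt_one₀ (by positivity) ?_ (by norm_num)
    rw [div_lt_one (by linarith)]
    linarith
  refine hlt.trans_le (one_le_pow₀ ?_)
  rw [le_div_iff₀ (by positivity), one_mul, div_pow, le_div_iff₀ (by positivity)]
  nlinarith [sq_nonneg c]

theorem critical_ineq_nine_tenths (hm : 2 ≤ m) :
    ((2 * m * (1 / 100) / (2 * m - 3)) ^ 2 / (9 / 10) ^ 2) ^ m <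
      (3 * (1 / 100) / (2 * m - 3) : ℝ) ^ 3 := by
  obtain ⟨j, rfl⟩ : ∃ j, m = j + 2 := ⟨m - 2, by omega⟩
  have hs : (2 * ((j + 2 : ℕ) : ℝ) - 3) = 1 + j * 2 := by push_cast; ring
  rw [hs]
  have hs₀ : (0 : ℝ) < 1 + j * 2 := by positivity
  have hbase :
      (2 * ((j + 2 : ℕ) : ℝ) * (1 / 100) / (1 + j * 2)) ^ 2 / (9 / 10) ^ 2 ≤ 4 / 2025 := by
    rw [div_le_iff₀ (by norm_num), div_pow, div_le_iff₀ (by positivity)]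
    push_cast
    nlinarith [sq_nonneg (j : ℝ)]
  have hcube : (1 + j * 2 : ℝ) ^ 3 ≤ 27 ^ j := by
    calc (1 + j * 2 : ℝ) ^ 3 ≤ ((1 + 2) ^ j) ^ 3 := by
          gcongr
          exact one_add_mul_le_pow (by norm_num) j
      _ = 27 ^ j := by rw [← pow_mul, mul_comm, pow_mul]; norm_num
  calc _ ≤ (4 / 2025 : ℝ) ^ (j + 2) := pow_le_pow_left₀ (by positivity) hbase _
    _ = (4 / 2025) ^ 2 * (4 / 2025) ^ j := by ring
    _ ≤ (4 / 2025) ^ 2 * (1 / 27) ^ j :=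
        mul_le_mul_of_nonneg_left (pow_le_pow_left₀ (by norm_num) (by norm_num) j) (by norm_num)
    _ < 27 / 100 ^ 3 / 27 ^ j := by
        rw [one_div_pow, mul_one_div]
        gcongr
        norm_num
    _ ≤ 27 / 100 ^ 3 / (1 + j * 2) ^ 3 := by gcongr
    _ = _ := by field_simp; ring

/-- `T m c k x / (c² x³)` for `x > 0`, written as a sum of convex powers. -/
noncomputable def TDivCube (m : ℕ) (c k x : ℝ) : ℝ :=
  x ^ (-3 : ℤ) + (c⁻¹ ^ 2 • x ^ ((2 * m : ℕ) - 3 : ℤ) + (2 * c⁻¹) • x ^ ((m : ℤ) - 3)) +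
    -(k / c ^ 2)

theorem strictConvexOn_TDivCube (hc : 0 < c) : StrictConvexOn ℝ (Set.Ioi 0) (TDivCube m c k) :=
  ((strictConvexOn_zpow (by norm_num) (by norm_num)).add_convexOn
    (((convexOn_zpow _).smul (by positivity)).add
      ((convexOn_zpow _).smul (by positivity)))).add_const _

theorem eval_T_eq_mul_TDivCube (hc : c ≠ 0) {x : ℝ} (hx : 0 < x) :
    (T m c k).eval x = c ^ 2 * x ^ 3 * TDivCube m c k x := by
  simp only [TDivCube, eval_T, smul_eq_mul, zpow_sub₀ hx.ne', zpow_neg, zpow_natCast]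
  field_simp
  ring

theorem eq_or_eq_of_eval_T_eq_zero (hc : 0 < c) (hk : 0 < k) {x₁ x₂ y : ℝ} (hlt : x₁ < x₂)
    (h₁ : (T m c k).eval x₁ = 0) (h₂ : (T m c k).eval x₂ = 0) (hy : (T m c k).eval y = 0) :
    y = x₁ ∨ y = x₂ := by
  have hpos : ∀ x, (T m c k).eval x = 0 → 0 < x := fun x hx =>
    not_le.mp fun hx' => (eval_T_pos_of_nonpos hc hk hx').ne' hx
  have hzero : ∀ x, (T m c k).eval x = 0 → TDivCube m c k x = 0 := fun x hx => by
    have hx₀ := hpos x hx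
    rw [eval_T_eq_mul_TDivCube hc.ne' hx₀] at hx
    exact (mul_eq_zero.mp hx).resolve_left (by positivity)
  exact (strictConvexOn_TDivCube hc).eq_or_eq_of_map_eq_zero (hpos _ h₁) (hpos _ h₂)
    (hpos _ hy) hlt (hzero _ h₁) (hzero _ h₂) (hzero _ hy)

theorem setOf_eval_T_eq_zero_eq_pair (hm : 2 ≤ m) :
    ∃ x₁ x₂ : ℝ, x₁ ≠ x₂ ∧ {x | (T m (1 / 100) ((9 / 10) ^ 2)).eval x = 0} = {x₁, x₂} := by
  set p := T m (1 / 100) ((9 / 10) ^ 2)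
  have h₀ : 0 < p.eval 0 := eval_T_pos_of_nonpos (by norm_num) (by norm_num) le_rfl
  have h₁ : 0 < p.eval 1 := by norm_num [p]
  have hquarter : p.eval (1 / 4) < 0 := by
    have : (1 / 4 : ℝ) ^ m ≤ (1 / 4) ^ 2 := pow_le_pow_of_le_one (by norm_num) (by norm_num) hm
    have : 0 < (1 / 4 : ℝ) ^ m := by positivity
    simp only [p, eval_T]
    nlinarith
  obtain ⟨x₁, hx₁, hpx₁⟩ := intermediate_value_Ioo' (by norm_num : (0 : ℝ) ≤ 1 / 4)
    p.continuous.continuousOn ⟨hquarter, h₀⟩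
  obtain ⟨x₂, hx₂, hpx₂⟩ := intermediate_value_Ioo (by norm_num : (1 / 4 : ℝ) ≤ 1)
    p.continuous.continuousOn ⟨hquarter, h₁⟩
  have hlt : x₁ < x₂ := hx₁.2.trans hx₂.1
  refine ⟨x₁, x₂, hlt.ne, Set.Subset.antisymm (fun y hy => ?_) ?_⟩
  · exact eq_or_eq_of_eval_T_eq_zero (by norm_num) (by norm_num) hlt hpx₁ hpx₂ hy
  · rintro y (rfl | rfl)
    exacts [hpx₁, hpx₂]

end T

theorem two_real_roots_and_disc_signs_general (d : ℕ) (hd : 4 ≤ d) :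
    {x : ℝ | (((X : ℝ[X]) ^ (d / 2) + C (1 / 100)) ^ 2 - C ((9 / 10 : ℝ) ^ 2) * X ^ 3).eval x
      = 0}.ncard = 2 ∧
    (∀ x : ℝ, (((X : ℝ[X]) ^ (d / 2) + C (1 / 100)) ^ 2 - C ((1 / 100 : ℝ) ^ 2) * X ^ 3).eval x
      ≠ 0) ∧
    ∃ a b : ℝ,
      (a : ℂ) = polyDisc ((((X : ℝ[X]) ^ (d / 2) + C (1 / 100)) ^ 2
        - C ((9 / 10 : ℝ) ^ 2) * X ^ 3).map (algebraMap ℝ ℂ)) ∧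
      (b : ℂ) = polyDisc ((((X : ℝ[X]) ^ (d / 2) + C (1 / 100)) ^ 2
        - C ((1 / 100 : ℝ) ^ 2) * X ^ 3).map (algebraMap ℝ ℂ)) ∧
      a * b < 0 := by
  have hm : 2 ≤ d / 2 := by omega
  obtain ⟨x₁, x₂, hne, hzeros⟩ := setOf_eval_T_eq_zero_eq_pair hm
  have hpos₀ := eval_T_sq_pos hm (c := 1 / 100) (by norm_num) (by norm_num)
  have hsep := separable_T hm (by norm_num) (by norm_num) (critical_ineq_nine_tenths hm).ne'
  have hsep₀ := separable_T hm (by norm_num) (by norm_num)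
    (critical_ineq_sq hm (c := 1 / 100) (by norm_num) (by norm_num)).ne
  have hcard : (T (d / 2) (1 / 100) ((9 / 10) ^ 2)).roots.card = 2 := by
    rw [card_roots_eq_ncard_of_separable hsep, hzeros, Set.ncard_pair hne]
  have hroots₀ : (T (d / 2) (1 / 100) ((1 / 100) ^ 2)).roots = 0 :=
    Multiset.eq_zero_of_forall_notMem fun x hx =>
      (hpos₀ x).ne' ((mem_roots hsep₀.ne_zero).mp hx)
  obtain ⟨v, hv, hdisc⟩ := exists_pos_polyDisc_map_complex_eq hsep
  obtain ⟨v₀, hv₀, hdisc₀⟩ := exists_pos_polyDisc_map_complex_eq hsep₀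
  refine ⟨(congrArg Set.ncard hzeros).trans (Set.ncard_pair hne), fun x => (hpos₀ x).ne',
    _, _, hdisc.symm, hdisc₀.symm, ?_⟩
  have hP := prod_derivative_eval_roots_neg_of_card_eq_two hsep hcard
  rw [natDegree_T hm, natDegree_T hm, (monic_T hm).leadingCoeff, (monic_T hm).leadingCoeff,
    hroots₀, Multiset.map_zero, Multiset.prod_zero, one_pow, mul_one, mul_one]
  have hs : ((-1 : ℝ) ^ (2 * (d / 2) * (2 * (d / 2) - 1) / 2)) ^ 2 = 1 := by
    rw [← pow_mul, pow_mul', neg_one_sq, one_pow]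
  nlinarith [mul_neg_of_neg_of_pos hP (mul_pos hv hv₀)]

/-- For even `d ≥ 4`, the real polynomial `T(x) = (x^(d/2) + 1/100)² - (9/10)² x³` has
exactly two real roots, while `T₀(x) = (x^(d/2) + 1/100)² - (1/100)² x³` has no real
roots; consequently their discriminants have opposite signs. -/
theorem two_real_roots_and_disc_signs (d : ℕ) (hd : 4 ≤ d) (heven : Even d) :
    {x : ℝ | (((X : ℝ[X]) ^ (d / 2) + C (1 / 100)) ^ 2 - C ((9 / 10 : ℝ) ^ 2) * X ^ 3).eval x
      = 0}.ncard = 2 ∧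
    (∀ x : ℝ, (((X : ℝ[X]) ^ (d / 2) + C (1 / 100)) ^ 2 - C ((1 / 100 : ℝ) ^ 2) * X ^ 3).eval x
      ≠ 0) ∧
    ∃ a b : ℝ,
      (a : ℂ) = polyDisc ((((X : ℝ[X]) ^ (d / 2) + C (1 / 100)) ^ 2
        - C ((9 / 10 : ℝ) ^ 2) * X ^ 3).map (algebraMap ℝ ℂ)) ∧
      (b : ℂ) = polyDisc ((((X : ℝ[X]) ^ (d / 2) + C (1 / 100)) ^ 2
        - C ((1 / 100 : ℝ) ^ 2) * X ^ 3).map (algebraMap ℝ ℂ)) ∧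
      a * b < 0 :=
  two_real_roots_and_disc_signs_general d hd
end
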